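/- arXiv:2203.07982 — 8 statements merged into one kernel-verified Lean document; each statement's English description precedes it below -/
import Mathlib

section
/- Let φ be a conjunction of gap-order constraints over variables X ∪ {y} and a finite constant set Const ⊆ ℤ (a gap-order constraint has the form x − y ≥ k with x, y variables or constants and k ∈ ℕ). Then there exists a quantifier-free conjunction φ' of gap-order constraints over variables X such that φ' is logically equivalent to ∃y. φ. -/
namespace GC

inductive GTerm (X : Type) where
  | var : X → GTerm X
  | const : ℤ → GTerm X

def GTerm.eval {X : Type} (α : X → ℤ) : GTerm X → ℤ
  | .var x => α x
  | .const c => c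

def GTerm.constIn {X : Type} (S : Set ℤ) : GTerm X → Prop
  | .var _ => True
  | .const c => c ∈ S

/-- A gap-order constraint `lhs - rhs ≥ gap` with `gap ∈ ℕ`. -/
structure GAtom (X : Type) where
  lhs : GTerm X
  rhs : GTerm X
  gap : ℕ

def GAtom.holds {X : Type} (α : X → ℤ) (a : GAtom X) : Prop :=
  a.lhs.eval α - a.rhs.eval α ≥ (a.gap : ℤ)

def GAtom.constIn {X : Type} (S : Set ℤ) (a : GAtom X) : Prop :=
  a.lhs.constIn S ∧ a.rhs.constIn S

/-- GC formulas: positive boolean combinations of gap-order constraints (and ⊤). -/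
inductive GCF (X : Type) where
  | tru : GCF X
  | atom : GAtom X → GCF X
  | and : GCF X → GCF X → GCF X
  | or : GCF X → GCF X → GCF X

def GCF.holds {X : Type} (α : X → ℤ) : GCF X → Prop
  | .tru => True
  | .atom a => a.holds α
  | .and f g => f.holds α ∧ g.holds α
  | .or f g => f.holds α ∨ g.holds α

def GCF.constIn {X : Type} (S : Set ℤ) : GCF X → Prop
  | .tru => True
  | .atom a => a.constIn S
  | .and f g => f.constIn S ∧ g.constIn S
  | .or f g => f.constIn S ∧ g.constIn S

/-- `K`-bounded approximation of a gap-order atom. -/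
def GAtom.cutoff {X : Type} (K : ℕ) (a : GAtom X) : GAtom X :=
  ⟨a.lhs, a.rhs, min a.gap K⟩

/-- `K`-bounded approximation: every atom `x - y ≥ k` with `k ≥ K` is
replaced by `x - y ≥ K`. -/
def GCF.cutoff {X : Type} (K : ℕ) : GCF X → GCF X
  | .tru => .tru
  | .atom a => .atom (a.cutoff K)
  | .and f g => .and (f.cutoff K) (g.cutoff K)
  | .or f g => .or (f.cutoff K) (g.cutoff K)

def conjHolds {X : Type} (α : X → ℤ) (φ : List (GAtom X)) : Prop :=
  ∀ a ∈ φ, a.holds α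

/-!
Over `X ∪ {y}` every atom either does not involve `y` (`y - y ≥ k` says the same as
`0 - 0 ≥ k`), or is a lower bound `t + k ≤ y`, or an upper bound `y ≤ t - k`. Integers admit a
`y` between finitely many lower and upper bounds iff each lower bound is at most each upper
bound, so `∃ y` is equivalent to the `y`-free atoms together with `t₂ - t₁ ≥ k₁ + k₂` for every
lower bound `t₁ + k₁` and upper bound `t₂ - k₂`: Fourier–Motzkin elimination.
-/

section

variable {X : Type}

theorem exists_between_iff_forall_le {α : Type*} [LinearOrder α] [Nonempty α] (L U : List α) :
    (∃ v, (∀ l ∈ L, l ≤ v) ∧ ∀ u ∈ U, v ≤ u) ↔ ∀ l ∈ L, ∀ u ∈ U, l ≤ u := by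
  refine ⟨fun ⟨v, hL, hU⟩ l hl u hu => (hL l hl).trans (hU u hu), fun h => ?_⟩
  induction L with
  | nil =>
    obtain ⟨v, hv⟩ := U.finite_toSet.bddBelow
    exact ⟨v, by simp, fun u hu => hv hu⟩
  | cons l L ih =>
    obtain ⟨v, hL, hU⟩ := ih fun l' hl' => h l' (List.mem_cons_of_mem _ hl')
    refine ⟨max l v, ?_, fun u hu => max_le (h l List.mem_cons_self u hu) (hU u hu)⟩
    simpa using fun l' hl' => Or.inr (hL l' hl')

def GTerm.restrict : GTerm (Option X) → Option (GTerm X)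
  | .var x => x.map .var
  | .const c => some (.const c)

inductive YConstraint (X : Type) where
  | lower (t : GTerm X) (k : ℕ)
  | upper (t : GTerm X) (k : ℕ)
  | free (a : GAtom X)

namespace YConstraint

def holds (α : X → ℤ) (v : ℤ) : YConstraint X → Prop
  | lower t k => t.eval α + k ≤ v
  | upper t k => v ≤ t.eval α - k
  | free a => a.holds α

def lowerBound (α : X → ℤ) : YConstraint X → Option ℤ
  | lower t k => some (t.eval α + k)
  | _ => none

def upperBound (α : X → ℤ) : YConstraint X → Option ℤ
  | upper t k => some (t.eval α - k)
  | _ => none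

def free? : YConstraint X → Option (GAtom X)
  | free a => some a
  | _ => none

def combine : YConstraint X → YConstraint X → Option (GAtom X)
  | lower s k₁, upper t k₂ => some ⟨t, s, k₁ + k₂⟩
  | _, _ => none

theorem holds_iff (α : X → ℤ) (v : ℤ) (f : YConstraint X) :
    f.holds α v ↔ (∀ l ∈ f.lowerBound α, l ≤ v) ∧ (∀ u ∈ f.upperBound α, v ≤ u) ∧
      ∀ a ∈ f.free?, a.holds α := by
  cases f <;> simp [holds, lowerBound, upperBound, free?]

theorem forall_combine_holds_iff (α : X → ℤ) (f g : YConstraint X) :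
    (∀ a ∈ f.combine g, a.holds α) ↔ ∀ l ∈ f.lowerBound α, ∀ u ∈ g.upperBound α, l ≤ u := by
  cases f <;> cases g <;> simp [combine, lowerBound, upperBound, GAtom.holds]
  omega

def eliminate (F : List (YConstraint X)) : List (GAtom X) :=
  F.filterMap free? ++ F.flatMap fun f => F.filterMap f.combine

theorem exists_forall_holds_iff (F : List (YConstraint X)) (α : X → ℤ) :
    (∃ v, ∀ f ∈ F, f.holds α v) ↔ ∀ a ∈ eliminate F, a.holds α := by
  have bounds : ∀ v, (∀ f ∈ F, f.holds α v) ↔ (∀ a ∈ F.filterMap free?, a.holds α) ∧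
      (∀ l ∈ F.filterMap (lowerBound α), l ≤ v) ∧ ∀ u ∈ F.filterMap (upperBound α), v ≤ u := by
    intro v
    simp only [holds_iff, List.forall_mem_filterMap, Option.mem_def, forall_and]
    tauto
  have pairs : (∀ a ∈ F.flatMap fun f => F.filterMap f.combine, a.holds α) ↔
      ∀ l ∈ F.filterMap (lowerBound α), ∀ u ∈ F.filterMap (upperBound α), l ≤ u := by
    simp only [List.forall_mem_flatMap, List.forall_mem_filterMap, ← Option.mem_def,
      forall_combine_holds_iff]
    exact ⟨fun h f hf l hl g hg u hu => h f hf g hg l hl u hu,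
      fun h f hf g hg l hl u hu => h f hf l hl g hg u hu⟩
  simp only [bounds, exists_and_left, exists_between_iff_forall_le, eliminate, List.mem_append, or_imp,
    forall_and, pairs]

end YConstraint

def GAtom.toYConstraint (a : GAtom (Option X)) : YConstraint X :=
  match a.lhs.restrict, a.rhs.restrict with
  | none, none => .free ⟨.const 0, .const 0, a.gap⟩
  | none, some t => .lower t a.gap
  | some s, none => .upper s a.gap
  | some s, some t => .free ⟨s, t, a.gap⟩

theorem GAtom.holds_elim_iff (a : GAtom (Option X)) (α : X → ℤ) (v : ℤ) :
    a.holds (fun x => Option.elim x v α) ↔ a.toYConstraint.holds α v := by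
  rcases a with ⟨(_ | _) | _, (_ | _) | _, k⟩ <;>
    simp only [holds, toYConstraint, GTerm.restrict, YConstraint.holds, GTerm.eval] <;> grind

end

theorem gc_conj_quantifier_elimination_general (X : Type)
    (φ : List (GAtom (Option X))) :
    ∃ φ' : List (GAtom X),
      ∀ α : X → ℤ,
        (∃ v : ℤ, conjHolds (fun x => Option.elim x v α) φ) ↔ conjHolds α φ' := by
  refine ⟨YConstraint.eliminate (φ.map GAtom.toYConstraint), fun α => ?_⟩
  simp only [conjHolds, GAtom.holds_elim_iff, ← YConstraint.exists_forall_holds_iff,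
    List.forall_mem_map]

/-- Quantifier elimination for conjunctions of gap-order
constraints: for a conjunction `φ` of GCs over variables `X ∪ {y}` (the extra
variable `y` is `Option.none`) and constants from the finite set `Const`,
there is a quantifier-free conjunction `φ'` of GCs over the variables `X`
that is logically equivalent to `∃ y. φ`. -/
theorem gc_conj_quantifier_elimination (X : Type) (Const : Finset ℤ)
    (φ : List (GAtom (Option X))) (hconst : ∀ a ∈ φ, a.constIn ↑Const) :
    ∃ φ' : List (GAtom X),
      ∀ α : X → ℤ,
        (∃ v : ℤ, conjHolds (fun x => Option.elim x v α) φ) ↔ conjHolds α φ' :=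
  gc_conj_quantifier_elimination_general X φ

end GC
end

section
/- Let φ be a GC formula over variables X and constants Const, and let K = max{|c − c'| + 1 : c, c' ∈ Const}. Then φ is satisfiable over ℤ if and only if its K-bounded approximation ⌊φ⌋_K (obtained by replacing every atom x − y ≥ k with k ≥ K by x − y ≥ K) is satisfiable over ℤ. -/
namespace GC

/-- Maximal gap occurring in a formula. -/
def GCF.maxGap {X : Type} : GCF X → ℕ
  | .tru => 0
  | .atom a => a.gap
  | .and f g => max f.maxGap g.maxGap
  | .or f g => max f.maxGap g.maxGap

/-- A GC formula `φ` over variables `X` and constants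
`Const` (with `0 ∈ Const`) is satisfiable over `ℤ` iff its `K`-bounded
approximation is, where `K = max {|c - c'| + 1 : c, c' ∈ Const}`. -/
theorem gc_cutoff_equisat (X : Type) (Const : Finset ℤ) (h0 : (0 : ℤ) ∈ Const)
    (K : ℕ) (hK : K = (Const ×ˢ Const).sup fun p => (p.1 - p.2).natAbs + 1)
    (φ : GCF X) (hconst : φ.constIn ↑Const) :
    (∃ α : X → ℤ, φ.holds α) ↔ (∃ α : X → ℤ, (φ.cutoff K).holds α) := by
  constructor
  · -- forward: cutoff atoms are weaker
    rintro ⟨α, hα⟩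
    refine ⟨α, ?_⟩
    clear hconst
    induction φ with
    | tru => trivial
    | atom a =>
        simp only [GCF.holds, GAtom.holds, GAtom.cutoff] at hα ⊢
        refine le_trans ?_ hα
        exact_mod_cast Nat.cast_le.mpr (min_le_left _ _)
    | and f g ihf ihg => exact ⟨ihf hα.1, ihg hα.2⟩
    | or f g ihf ihg => exact hα.elim (fun h => Or.inl (ihf h)) (fun h => Or.inr (ihg h))
  · rintro ⟨α, hα⟩
    have hne : Const.Nonempty := ⟨0, h0⟩
    set cmin : ℤ := Const.min' hne with hcmin
    set cmax : ℤ := Const.max' hne with hcmax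
    set G : ℕ := φ.maxGap with hG
    -- the stretching map
    set g : ℤ → ℤ :=
      fun z => z + (G : ℤ) * (max (z - cmax) 0 + min (z - cmin) 0) with hg
    set A : ℤ → ℤ := fun z => max (z - cmax) 0 + min (z - cmin) 0 with hA
    have hgA : ∀ z, g z = z + (G : ℤ) * A z := fun z => rfl
    have hcc : cmin ≤ cmax := Const.min'_le _ (Const.max'_mem hne)
    -- A is monotone
    have hAmono : ∀ u v : ℤ, v ≤ u → A v ≤ A u := by
      intro u v huv
      exact add_le_add (max_le_max (by linarith) le_rfl)
        (min_le_min (by linarith) le_rfl)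
    -- bounds on A
    have hA_ge : ∀ z : ℤ, z - cmax ≤ A z := by
      intro z
      rcases le_or_gt cmin z with h | h
      · have : min (z - cmin) 0 = 0 := min_eq_right (by linarith)
        simp only [hA, this, add_zero]; exact le_max_left _ _
      · have h1 : max (z - cmax) 0 = 0 := max_eq_right (by linarith)
        have h2 : min (z - cmin) 0 = z - cmin := min_eq_left (by linarith)
        simp only [hA, h1, h2, zero_add]; linarith
    have hA_le : ∀ z : ℤ, A z ≤ z - cmin := by
      intro z
      rcases le_or_gt z cmax with h | h
      · have h1 : max (z - cmax) 0 = 0 := max_eq_right (by linarith)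
        simp only [hA, h1, zero_add]; exact min_le_left _ _
      · have h1 : max (z - cmax) 0 = z - cmax := max_eq_left (by linarith)
        have h2 : min (z - cmin) 0 = 0 := min_eq_right (by linarith)
        simp only [hA, h1, h2, add_zero]; linarith
    -- g fixes constants
    have hgc : ∀ c ∈ Const, g c = c := by
      intro c hc
      have h1 : max (c - cmax) 0 = 0 := max_eq_right (by
        have := Const.le_max' c hc; linarith)
      have h2 : min (c - cmin) 0 = 0 := min_eq_right (by
        have := Const.min'_le c hc; linarith)
      simp [hg, h1, h2]
    -- g expands gaps
    have hexp : ∀ u v : ℤ, v ≤ u → u - v ≤ g u - g v := by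
      intro u v huv
      have := hAmono u v huv
      have hGnn : (0 : ℤ) ≤ (G : ℤ) := Int.natCast_nonneg _
      rw [hgA, hgA]
      nlinarith
    -- K dominates constant span
    have hKspan : cmax - cmin + 1 ≤ (K : ℤ) := by
      have hmem : (cmax, cmin) ∈ Const ×ˢ Const :=
        Finset.mem_product.mpr ⟨Const.max'_mem hne, Const.min'_mem hne⟩
      have hle : (cmax - cmin).natAbs + 1 ≤ K := by
        rw [hK]
        exact Finset.le_sup (f := fun p => (p.1 - p.2).natAbs + 1) hmem
      have : cmax - cmin ≤ |cmax - cmin| := le_abs_self _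
      have := (Nat.cast_le (α := ℤ)).mpr hle
      push_cast at this
      linarith
    -- big jumps become arbitrarily large
    have hbig : ∀ u v : ℤ, (K : ℤ) ≤ u - v → (G : ℤ) + 1 ≤ g u - g v := by
      intro u v huv
      have h1 : (1 : ℤ) ≤ A u - A v := by
        have := hA_ge u
        have := hA_le v
        linarith
      have hK1 : (1 : ℤ) ≤ (K : ℤ) := by linarith
      have hGnn : (0 : ℤ) ≤ (G : ℤ) := Int.natCast_nonneg _
      rw [hgA, hgA]
      nlinarith
    -- key atom-level inequality
    have hkey : ∀ k : ℕ, k ≤ G → ∀ u v : ℤ,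
        ((min k K : ℕ) : ℤ) ≤ u - v → (k : ℤ) ≤ g u - g v := by
      intro k hkG u v huv
      rcases le_or_gt k K with h | h
      · have hmin : min k K = k := min_eq_left h
        rw [hmin] at huv
        have hvu : v ≤ u := by
          have : (0 : ℤ) ≤ (k : ℤ) := Int.natCast_nonneg _
          linarith
        have := hexp u v hvu
        linarith
      · have hmin : min k K = K := min_eq_right h.le
        rw [hmin] at huv
        have := hbig u v huv
        have : (k : ℤ) ≤ (G : ℤ) := by exact_mod_cast hkG
        linarith
    -- evaluation of terms under the stretched assignment
    have hterm : ∀ t : GTerm X, t.constIn ↑Const →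
        t.eval (fun x => g (α x)) = g (t.eval α) := by
      intro t ht
      cases t with
      | var x => rfl
      | const c => exact (hgc c ht).symm
    refine ⟨fun x => g (α x), ?_⟩
    -- main induction, generalizing over subformulas
    have main : ∀ f : GCF X, f.constIn ↑Const → f.maxGap ≤ G →
        (f.cutoff K).holds α → f.holds (fun x => g (α x)) := by
      intro f
      induction f with
      | tru => intro _ _ _; trivial
      | atom a =>
          intro hc hle hh
          simp only [GCF.holds, GAtom.holds] at hh ⊢
          rw [hterm a.lhs hc.1, hterm a.rhs hc.2]
          exact hkey a.gap hle _ _ hh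
      | and f1 f2 ih1 ih2 =>
          intro hc hle hh
          exact ⟨ih1 hc.1 (le_trans (le_max_left _ _) hle) hh.1,
                 ih2 hc.2 (le_trans (le_max_right _ _) hle) hh.2⟩
      | or f1 f2 ih1 ih2 =>
          intro hc hle hh
          exact hh.elim
            (fun h => Or.inl (ih1 hc.1 (le_trans (le_max_left _ _) hle) h))
            (fun h => Or.inr (ih2 hc.2 (le_trans (le_max_right _ _) hle) h))
    exact main φ hconst le_rfl hα

end GC
end

section
/- For every symbolic run σ of a DDSA B of length n abstracting a run ρ: (b₀,α₀) →a₁ ... →aₙ (bₙ,αₙ), and every verification constraint sequence C⃗ = ⟨C₀,...,Cₙ⟩ such that αᵢ satisfies all constraints in Cᵢ for all 0 ≤ i ≤ n, the final assignment αₙ satisfies the history constraint hist(σ, C⃗). -/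
namespace DDS

inductive Trm (X D : Type) where
  | var : X → Trm X D
  | const : D → Trm X D
  | add : Trm X D → Trm X D → Trm X D
  | sub : Trm X D → Trm X D → Trm X D

def Trm.eval {X D : Type} [Add D] [Sub D] (α : X → D) : Trm X D → D
  | .var x => α x
  | .const c => c
  | .add s t => s.eval α + t.eval α
  | .sub s t => s.eval α - t.eval α

def Trm.vars {X D : Type} : Trm X D → Set X
  | .var x => {x}
  | .const _ => ∅
  | .add s t => s.vars ∪ t.vars
  | .sub s t => s.vars ∪ t.vars

def Trm.consts {X D : Type} : Trm X D → Set D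
  | .var _ => ∅
  | .const c => {c}
  | .add s t => s.consts ∪ t.consts
  | .sub s t => s.consts ∪ t.consts

/-- Conjunctions of linear arithmetic constraints (Definition 1), with the
trivially true constraint `tru` (the empty conjunction). -/
inductive Constr (X D : Type) where
  | tru : Constr X D
  | eq : Trm X D → Trm X D → Constr X D
  | ne : Trm X D → Trm X D → Constr X D
  | lt : Trm X D → Trm X D → Constr X D
  | le : Trm X D → Trm X D → Constr X D
  | and : Constr X D → Constr X D → Constr X D

def Constr.holds {X D : Type} [Add D] [Sub D] [LT D] [LE D] (α : X → D) :
    Constr X D → Prop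
  | .tru => True
  | .eq s t => s.eval α = t.eval α
  | .ne s t => s.eval α ≠ t.eval α
  | .lt s t => s.eval α < t.eval α
  | .le s t => s.eval α ≤ t.eval α
  | .and c d => c.holds α ∧ d.holds α

def Constr.vars {X D : Type} : Constr X D → Set X
  | .tru => ∅
  | .eq s t => s.vars ∪ t.vars
  | .ne s t => s.vars ∪ t.vars
  | .lt s t => s.vars ∪ t.vars
  | .le s t => s.vars ∪ t.vars
  | .and c d => c.vars ∪ d.vars

def Constr.consts {X D : Type} : Constr X D → Set D
  | .tru => ∅
  | .eq s t => s.consts ∪ t.consts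
  | .ne s t => s.consts ∪ t.consts
  | .lt s t => s.consts ∪ t.consts
  | .le s t => s.consts ∪ t.consts
  | .and c d => c.consts ∪ d.consts

/-- A data-aware dynamic system with arithmetic (Definition 2).  Guards are
constraints over read variables (`Sum.inl`) and write variables (`Sum.inr`). -/
structure DDSA (B A X D : Type) where
  init : B
  trans : B → A → Option B
  final : Set B
  a0 : X → D
  guard : A → Constr (X ⊕ X) D

variable {B A X D : Type} [Add D] [Sub D] [LT D] [LE D]

/-- `write(a)`: variables whose write copy occurs in the guard of `a`. -/
def DDSA.writes (M : DDSA B A X D) (a : A) : Set X :=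
  {x | Sum.inr x ∈ (M.guard a).vars}

/-- Semantics of the transition formula
`Δ_a = guard(a) ∧ ⋀_{v ∉ write(a)} v^w = v^r`. -/
def DDSA.deltaHolds (M : DDSA B A X D) (a : A) (β : X ⊕ X → D) : Prop :=
  (M.guard a).holds β ∧ ∀ v, v ∉ M.writes a → β (Sum.inr v) = β (Sum.inl v)

/-- A step `(b, α) →a (b', α')` of the DDSA. -/
def DDSA.step (M : DDSA B A X D) (b : B) (α : X → D) (a : A) (b' : B)
    (α' : X → D) : Prop :=
  M.trans b a = some b' ∧ (M.guard a).holds (Sum.elim α α') ∧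
    ∀ v, v ∉ M.writes a → α' v = α v

/-- Symbolic runs: paths in the transition graph. -/
inductive DDSA.SymRun (M : DDSA B A X D) : B → List A → B → Prop where
  | nil (b : B) : DDSA.SymRun M b [] b
  | cons {b b' b'' : B} {a : A} {as : List A} :
      M.trans b a = some b' → DDSA.SymRun M b' as b'' →
      DDSA.SymRun M b (a :: as) b''

/-- Runs with explicit intermediate assignments: each list entry records the
action taken and the assignment reached after it. -/
inductive DDSA.RunSteps (M : DDSA B A X D) :
    B → (X → D) → List (A × (X → D)) → B → Prop where
  | nil (b : B) (α : X → D) : DDSA.RunSteps M b α [] b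
  | cons {b b' b'' : B} {α α' : X → D} {a : A} {l : List (A × (X → D))} :
      M.step b α a b' α' → DDSA.RunSteps M b' α' l b'' →
      DDSA.RunSteps M b α ((a, α') :: l) b''

/-- An assignment satisfies a set of constraints. -/
def csHolds (α : X → D) (C : Set (Constr X D)) : Prop := ∀ c ∈ C, c.holds α

/-- Semantics of `update(φ, a) = ∃U. φ(U) ∧ Δ_a(U, V)`. -/
def DDSA.updateSem (M : DDSA B A X D) (P : (X → D) → Prop) (a : A) :
    (X → D) → Prop :=
  fun α' => ∃ α, P α ∧ M.deltaHolds a (Sum.elim α α')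

/-- Semantics of `⋀(C_{α₀} ∪ C)`. -/
def DDSA.initPred (M : DDSA B A X D) (C : Set (Constr X D)) : (X → D) → Prop :=
  fun α => (∀ v, α v = M.a0 v) ∧ csHolds α C

/-- Semantics of the history constraint `hist(σ, C⃗)` (Definition 7), where
the symbolic run and the verification constraint sequence are paired up:
`C0` is the constraint set attached to the initial position, and each list
entry pairs an action with the constraint set of the position it reaches. -/
def DDSA.hist (M : DDSA B A X D) (C0 : Set (Constr X D))
    (steps : List (A × Set (Constr X D))) : (X → D) → Prop :=
  steps.foldl (fun P p => fun α => M.updateSem P p.1 α ∧ csHolds α p.2)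
    (M.initPred C0)

/-- Logical equivalence. -/
def eqv {X D : Type} (P Q : (X → D) → Prop) : Prop := ∀ α, P α ↔ Q α

/-- `P` is (equivalent to) a history constraint of `(M, CC)` whose symbolic
run ends in `b`. -/
def DDSA.HistoryOf (M : DDSA B A X D) (CC : Set (Constr X D)) (b : B)
    (P : (X → D) → Prop) : Prop :=
  ∃ (C0 : Set (Constr X D)) (steps : List (A × Set (Constr X D))),
    C0 ⊆ CC ∧ (∀ p ∈ steps, p.2 ⊆ CC) ∧
    M.SymRun M.init (steps.map Prod.fst) b ∧ eqv P (M.hist C0 steps)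

/-- The characterization of history sets from Lemma 2: closure under initial
constraints and under updates. -/
def DDSA.IsHistorySet (M : DDSA B A X D) (CC : Set (Constr X D))
    (Φ : Set (B × ((X → D) → Prop))) : Prop :=
  (∀ C ⊆ CC, ∃ Q, (M.init, Q) ∈ Φ ∧ eqv Q (M.initPred C)) ∧
  (∀ b P, (b, P) ∈ Φ → ∀ a b', M.trans b a = some b' → ∀ C ⊆ CC,
    ∃ Q, (b', Q) ∈ Φ ∧ eqv Q (fun α => M.updateSem P a α ∧ csHolds α C))

/-- History sets (Definition 6): `Φ` contains, up to logical equivalence,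
exactly the history constraints of `(M, CC)` paired with their end states. -/
def DDSA.IsHistorySetExact (M : DDSA B A X D) (CC : Set (Constr X D))
    (Φ : Set (B × ((X → D) → Prop))) : Prop :=
  (∀ b P, M.HistoryOf CC b P → ∃ Q, (b, Q) ∈ Φ ∧ eqv P Q) ∧
  (∀ b Q, (b, Q) ∈ Φ → M.HistoryOf CC b Q)

/-- `(M, CC)` has finite summary; by Lemma 3 a finite history set suffices
(taking logical equivalence as the equivalence relation). -/
def DDSA.HasFiniteSummary (M : DDSA B A X D) (CC : Set (Constr X D)) : Prop :=
  ∃ Φ : Set (B × ((X → D) → Prop)), Φ.Finite ∧ M.IsHistorySet CC Φ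

/-- One step of the history recursion: `update(P, a) ∧ ⋀C`. -/
def DDSA.histStep (M : DDSA B A X D) (P : (X → D) → Prop) (p : A × Set (Constr X D)) :
    (X → D) → Prop :=
  fun α => M.updateSem P p.1 α ∧ csHolds α p.2

theorem DDSA.hist_eq_foldl (M : DDSA B A X D) (C0 : Set (Constr X D))
    (steps : List (A × Set (Constr X D))) :
    M.hist C0 steps = steps.foldl M.histStep (M.initPred C0) :=
  rfl

theorem DDSA.initPred_a0 {M : DDSA B A X D} {C : Set (Constr X D)} (h : csHolds M.a0 C) :
    M.initPred C M.a0 :=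
  ⟨fun _ => rfl, h⟩

theorem DDSA.updateSem_of_step {M : DDSA B A X D} {P : (X → D) → Prop} {b b' : B}
    {α α' : X → D} {a : A} (hP : P α) (h : M.step b α a b' α') : M.updateSem P a α' :=
  ⟨α, hP, h.2.1, h.2.2⟩

theorem DDSA.foldl_histStep_of_runSteps {M : DDSA B A X D} :
    ∀ (l : List (A × Set (Constr X D) × (X → D))) {P : (X → D) → Prop} {b b' : B}
      {α : X → D}, P α → M.RunSteps b α (l.map fun t => (t.1, t.2.2)) b' →
      (∀ t ∈ l, csHolds t.2.2 t.2.1) →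
      (l.map fun t => (t.1, t.2.1)).foldl M.histStep P ((l.map fun t => t.2.2).getLastD α)
  | [], _, _, _, _, hP, _, _ => hP
  | t :: l, _, _, _, _, hP, .cons hstep hrest, hC => by
    simp only [List.map_cons, List.foldl_cons, List.getLastD_cons]
    exact foldl_histStep_of_runSteps l
      ⟨updateSem_of_step hP hstep, hC t List.mem_cons_self⟩ hrest
      fun u hu => hC u (List.mem_cons_of_mem t hu)

/-- Lemma 1, part 1.  If a symbolic run of `M` abstracts a
run `(b₀,α₀) →a₁ … →aₙ (bₙ,αₙ)` and every intermediate assignment `αᵢ`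
satisfies its verification constraint set `Cᵢ`, then the final assignment
`αₙ` satisfies the history constraint `hist(σ, C⃗)`.  Each list entry of `l`
records the action of a step, the verification constraint set attached to the
position reached, and the assignment reached. -/
theorem hist_sound (B A X D : Type) [Add D] [Sub D] [LT D] [LE D]
    (M : DDSA B A X D) (C0 : Set (Constr X D))
    (l : List (A × Set (Constr X D) × (X → D))) (bn : B)
    (h0 : csHolds M.a0 C0)
    (hrun : M.RunSteps M.init M.a0 (l.map fun t => (t.1, t.2.2)) bn)
    (hC : ∀ t ∈ l, csHolds t.2.2 t.2.1) :
    M.hist C0 (l.map fun t => (t.1, t.2.1))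
      ((l.map fun t => t.2.2).getLastD M.a0) := by
  rw [DDSA.hist_eq_foldl]
  exact DDSA.foldl_histStep_of_runSteps l (DDSA.initPred_a0 h0) hrun hC

end DDS
end

section
/- For every symbolic run σ of a DDSA B of length n and verification constraint sequence C⃗ = ⟨C₀,...,Cₙ⟩, if an assignment α satisfies the history constraint hist(σ, C⃗), then there exists a run ρ: (b₀,α₀) →a₁ ... →aₙ (bₙ,αₙ) abstracted by σ such that αₙ = α and αᵢ satisfies all constraints in Cᵢ for every 0 ≤ i ≤ n. -/
namespace DDS

variable {B A X D : Type} [Add D] [Sub D] [LT D] [LE D]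

lemma symrun_append_singleton {M : DDSA B A X D} {b b'' : B} {as : List A}
    {a : A} (h : M.SymRun b (as ++ [a]) b'') :
    ∃ b', M.SymRun b as b' ∧ M.trans b' a = some b'' := by
  induction as generalizing b with
  | nil =>
    cases h with
    | cons h1 h2 =>
      cases h2
      exact ⟨b, .nil b, h1⟩
  | cons x xs ih =>
    cases h with
    | cons h1 h2 =>
      obtain ⟨b', hs, ht⟩ := ih h2
      exact ⟨b', .cons h1 hs, ht⟩

lemma runsteps_snoc {M : DDSA B A X D} {b b' b'' : B} {α α'' : X → D}
    {l : List (A × (X → D))} {a : A}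
    (h : M.RunSteps b α l b')
    (hs : M.step b' ((l.map Prod.snd).getLastD α) a b'' α'') :
    M.RunSteps b α (l ++ [(a, α'')]) b'' := by
  induction h with
  | nil b α => exact .cons (by simpa using hs) (.nil _ _)
  | cons h1 h2 ih =>
    simp only [List.map_cons, List.getLastD_cons] at hs
    exact .cons h1 (ih hs)

/-- Lemma 1, part 2.  If an assignment `α` satisfies the
history constraint `hist(σ, C⃗)` of a symbolic run `σ` (given by the action
sequence of `steps`, ending in `bn`), then there is a run of `M` abstracted
by `σ` whose final assignment is `α` and whose intermediate assignments
satisfy the respective verification constraint sets. -/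
theorem hist_complete (B A X D : Type) [Add D] [Sub D] [LT D] [LE D]
    (M : DDSA B A X D) (C0 : Set (Constr X D))
    (steps : List (A × Set (Constr X D))) (bn : B) (α : X → D)
    (hsym : M.SymRun M.init (steps.map Prod.fst) bn)
    (hhist : M.hist C0 steps α) :
    csHolds M.a0 C0 ∧
    ∃ l : List (A × (X → D)),
      M.RunSteps M.init M.a0 l bn ∧
      List.Forall₂
        (fun (p : A × (X → D)) (q : A × Set (Constr X D)) =>
          p.1 = q.1 ∧ csHolds p.2 q.2) l steps ∧
      (l.map fun p => p.2).getLastD M.a0 = α := by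
  induction steps using List.reverseRecOn generalizing bn α with
  | nil =>
    cases hsym
    obtain ⟨ha, hc⟩ := hhist
    have : α = M.a0 := funext ha
    subst this
    exact ⟨hc, [], .nil _ _, .nil, rfl⟩
  | append_singleton s p ih =>
    simp only [List.map_append] at hsym
    obtain ⟨b', hs, ht⟩ := symrun_append_singleton hsym
    have hh : M.updateSem (M.hist C0 s) p.1 α ∧ csHolds α p.2 := by
      simpa [DDSA.hist, List.foldl_append] using hhist
    obtain ⟨⟨α', hα', hδ⟩, hcs⟩ := hh
    obtain ⟨hC0, l, hrun, hfa, hlast⟩ := ih b' α' hs hα'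
    refine ⟨hC0, l ++ [(p.1, α)], ?_, ?_, ?_⟩
    · refine runsteps_snoc hrun ?_
      have hlast' : (l.map Prod.snd).getLastD M.a0 = α' := hlast
      rw [hlast']
      exact ⟨ht, hδ.1, fun v hv => hδ.2 v hv⟩
    · exact List.rel_append hfa (.cons ⟨rfl, hcs⟩ .nil)
    · simp

end DDS
end

section
/- If B is a DDSA all of whose guards are conjunctions of monotonicity constraints over ℚ, and 𝒞 is a finite set of monotonicity constraints, then (B, 𝒞) admits a finite summary; specifically, B × MC_Const is a finite history set for (B, 𝒞), where Const is the set of constants appearing in 𝒞, α₀, and the guards of B, and MC_Const is the (finite up to equivalence) set of quantifier-free MC-formulas over V and Const. -/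
/-!
Call two assignments equivalent when they have the same order type, i.e. the same comparisons
among their values and with the constants of `Const`. A predicate is defined by an MC-formula over
`Const` exactly when it is invariant under this equivalence: MC-atoms only see the order type, and
conversely each of the finitely many order types is cut out by the conjunction of its comparisons.
Hence there are only finitely many such predicates, and it remains to see that invariance survives
initialisation and updates. The only non-trivial point is the existential quantifier in
`update(φ, a)`: since `ℚ` is dense without endpoints, a finite order-preserving partial map that
fixes `Const` extends to any further finitely many points (the back-and-forth step of Cantor's
theorem), so a witness for one assignment is transported to a witness for any equivalent one.
-/

namespace DDS

variable {B A X D : Type} [Add D] [Sub D] [LT D] [LE D]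

/-- Atomic terms: variables or constants. -/
def Trm.atomic {X D : Type} : Trm X D → Prop
  | .var _ => True
  | .const _ => True
  | _ => False

/-- Monotonicity constraints: conjunctions of comparisons between atomic
terms. -/
def Constr.isMC {X D : Type} : Constr X D → Prop
  | .tru => True
  | .eq s t => s.atomic ∧ t.atomic
  | .ne s t => s.atomic ∧ t.atomic
  | .lt s t => s.atomic ∧ t.atomic
  | .le s t => s.atomic ∧ t.atomic
  | .and c d => c.isMC ∧ d.isMC

/-- Boolean combinations of constraints (used for MC-formulas). -/
inductive BForm (X D : Type) where
  | atom : Constr X D → BForm X D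
  | and : BForm X D → BForm X D → BForm X D
  | or : BForm X D → BForm X D → BForm X D
  | not : BForm X D → BForm X D

def BForm.holds {X D : Type} [Add D] [Sub D] [LT D] [LE D] (α : X → D) :
    BForm X D → Prop
  | .atom c => c.holds α
  | .and f g => f.holds α ∧ g.holds α
  | .or f g => f.holds α ∨ g.holds α
  | .not f => ¬ f.holds α

def BForm.isMC {X D : Type} : BForm X D → Prop
  | .atom c => c.isMC
  | .and f g => f.isMC ∧ g.isMC
  | .or f g => f.isMC ∧ g.isMC
  | .not f => f.isMC

def BForm.constsIn {X D : Type} (S : Set D) : BForm X D → Prop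
  | .atom c => c.consts ⊆ S
  | .and f g => f.constsIn S ∧ g.constsIn S
  | .or f g => f.constsIn S ∧ g.constsIn S
  | .not f => f.constsIn S

/-- `B × MC_Const`: all pairs of a state and a predicate definable by an
MC-formula over `V` and `Const`. -/
def PhiMC (B X : Type) (Const : Finset ℚ) : Set (B × ((X → ℚ) → Prop)) :=
  {p | ∃ φ : BForm X ℚ, φ.isMC ∧ φ.constsIn ↑Const ∧
    p.2 = fun α => φ.holds α}

open Order

section OrderPattern

variable {ι κ α β : Type*} [LinearOrder α] [LinearOrder β]

def orderPattern (f : ι → α) (i j : ι) : Ordering := cmp (f i) (f j)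

theorem orderPattern_comp (f : ι → α) (e : κ → ι) :
    orderPattern (f ∘ e) = fun i j => orderPattern f (e i) (e j) := rfl

theorem _root_.Order.PartialIso.orderPattern_eq (G : PartialIso α β) {f : ι → α}
    {g : ι → β} (h : ∀ i, (f i, g i) ∈ G.val) : orderPattern f = orderPattern g :=
  funext₂ fun i j => G.prop _ (h i) _ (h j)

theorem _root_.Order.PartialIso.exists_le_forall_mem [DenselyOrdered β] [NoMinOrder β]
    [NoMaxOrder β] [Nonempty β] (F : PartialIso α β) (s : Finset α) :
    ∃ G, F ≤ G ∧ ∀ a ∈ s, ∃ b, (a, b) ∈ G.val := by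
  classical
  induction s using Finset.induction_on with
  | empty => exact ⟨F, le_rfl, by simp⟩
  | insert a s _ ih =>
    obtain ⟨G, hFG, hG⟩ := ih
    obtain ⟨G', ⟨b, hb⟩, hGG'⟩ := (PartialIso.definedAtLeft β a).isCofinal G
    refine ⟨G', hFG.trans hGG', ?_⟩
    simp only [Finset.mem_insert, forall_eq_or_imp]
    exact ⟨⟨b, hb⟩, fun a' ha' => (hG a' ha').imp fun _ h => hGG' h⟩

theorem exists_orderPattern_sumElim_eq [DenselyOrdered α] [NoMinOrder α] [NoMaxOrder α]
    [Nonempty α] [Finite ι] [Finite κ] {f g : ι → α} (h : orderPattern f = orderPattern g)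
    (u : κ → α) :
    ∃ w : κ → α, orderPattern (Sum.elim u f) = orderPattern (Sum.elim w g) := by
  classical
  cases nonempty_fintype ι
  cases nonempty_fintype κ
  let F : PartialIso α α := ⟨Finset.univ.image fun i => (f i, g i), by
    simp only [Finset.mem_image, Finset.mem_univ, true_and]
    rintro _ ⟨i, rfl⟩ _ ⟨j, rfl⟩
    exact congrFun₂ h i j⟩
  obtain ⟨G, hFG, hG⟩ := F.exists_le_forall_mem (Finset.univ.image u)
  choose w hw using fun k => hG (u k) (Finset.mem_image_of_mem u (Finset.mem_univ k))
  refine ⟨w, G.orderPattern_eq ?_⟩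
  rintro (k | i)
  · exact hw k
  · exact hFG (Finset.mem_image_of_mem _ (Finset.mem_univ i))

end OrderPattern

section OrderTypeOver

variable {Y R : Type} [LinearOrder R] {K : Finset R}

def orderTypeOver (K : Finset R) (v : X → R) : X ⊕ K → X ⊕ K → Ordering :=
  orderPattern (Sum.elim v (↑))

def OrderInvariant (K : Finset R) (P : (X → R) → Prop) : Prop :=
  ∀ ⦃v w⦄, orderTypeOver K v = orderTypeOver K w → P v → P w

theorem OrderInvariant.iff_mem_image {P : (X → R) → Prop} (hP : OrderInvariant K P)
    (v : X → R) : P v ↔ orderTypeOver K v ∈ orderTypeOver K '' {w | P w} :=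
  ⟨fun h => ⟨v, h, rfl⟩, fun ⟨_, hw, h⟩ => hP h hw⟩

theorem OrderInvariant.and {P Q : (X → R) → Prop} (hP : OrderInvariant K P)
    (hQ : OrderInvariant K Q) : OrderInvariant K fun v => P v ∧ Q v :=
  fun _ _ h hv => ⟨hP h hv.1, hQ h hv.2⟩

theorem orderTypeOver_comp (v : X → R) (e : Y → X) :
    orderTypeOver K (v ∘ e) =
      fun i j => orderTypeOver K v (Sum.map e id i) (Sum.map e id j) := by
  rw [orderTypeOver, orderTypeOver, ← orderPattern_comp]
  congr 1
  funext i
  rcases i with y | c <;> rfl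

theorem OrderInvariant.comp {P : (Y → R) → Prop} (hP : OrderInvariant K P) (e : Y → X) :
    OrderInvariant K fun v => P (v ∘ e) :=
  fun v w h => hP (by rw [orderTypeOver_comp, orderTypeOver_comp, h])

theorem OrderInvariant.exists_sumElim [Finite X] [DenselyOrdered R] [NoMinOrder R]
    [NoMaxOrder R] [Nonempty R] {Q : (X ⊕ X → R) → Prop} (hQ : OrderInvariant K Q) :
    OrderInvariant K fun v' => ∃ v, Q (Sum.elim v v') := by
  have reassoc : ∀ u u' : X → R, orderTypeOver K (Sum.elim u u') =
      fun i j => orderPattern (Sum.elim u (Sum.elim u' (↑))) (Equiv.sumAssoc X X K i)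
        (Equiv.sumAssoc X X K j) := by
    intro u u'
    rw [orderTypeOver, ← orderPattern_comp]
    congr 1
    funext i
    rcases i with (x | x) | c <;> rfl
  rintro v' w' h ⟨v, hv⟩
  obtain ⟨w, hw⟩ := exists_orderPattern_sumElim_eq h v
  exact ⟨w, hQ (by rw [reassoc, reassoc, hw]) hv⟩

end OrderTypeOver

section MonotonicityConstraints

variable {R : Type} {K : Finset R}

def indexTrm (K : Finset R) : X ⊕ K → Trm X R :=
  Sum.elim .var fun c => .const c

theorem Trm.exists_eq_indexTrm {t : Trm X R} (ht : t.atomic) (hK : t.consts ⊆ ↑K) :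
    ∃ i, t = indexTrm K i := by
  cases t with
  | var x => exact ⟨.inl x, rfl⟩
  | const c => exact ⟨.inr ⟨c, hK rfl⟩, rfl⟩
  | add _ _ | sub _ _ => exact ht.elim

variable [Add R] [Sub R]

theorem eval_indexTrm (v : X → R) (i : X ⊕ K) :
    (indexTrm K i).eval v = Sum.elim v (↑) i := by
  rcases i with x | c <;> rfl

variable [LinearOrder R]

theorem cmp_eval_eq_of_orderTypeOver_eq {s t : Trm X R} (hs : s.atomic ∧ t.atomic)
    (hK : s.consts ∪ t.consts ⊆ ↑K) {v w : X → R}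
    (h : orderTypeOver K v = orderTypeOver K w) :
    cmp (s.eval v) (t.eval v) = cmp (s.eval w) (t.eval w) := by
  obtain ⟨i, rfl⟩ := Trm.exists_eq_indexTrm hs.1 (Set.union_subset_iff.1 hK).1
  obtain ⟨j, rfl⟩ := Trm.exists_eq_indexTrm hs.2 (Set.union_subset_iff.1 hK).2
  simp only [eval_indexTrm]
  exact congrFun₂ h i j

theorem Constr.holds_iff_of_orderTypeOver_eq {c : Constr X R} (hc : c.isMC)
    (hK : c.consts ⊆ ↑K) {v w : X → R} (h : orderTypeOver K v = orderTypeOver K w) :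
    c.holds v ↔ c.holds w := by
  induction c with
  | tru => exact Iff.rfl
  | eq s t => exact eq_iff_eq_of_cmp_eq_cmp (cmp_eval_eq_of_orderTypeOver_eq hc hK h)
  | ne s t =>
    exact not_congr (eq_iff_eq_of_cmp_eq_cmp (cmp_eval_eq_of_orderTypeOver_eq hc hK h))
  | lt s t => exact lt_iff_lt_of_cmp_eq_cmp (cmp_eval_eq_of_orderTypeOver_eq hc hK h)
  | le s t => exact le_iff_le_of_cmp_eq_cmp (cmp_eval_eq_of_orderTypeOver_eq hc hK h)
  | and c d ihc ihd =>
    obtain ⟨hKc, hKd⟩ := Set.union_subset_iff.1 hK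
    exact and_congr (ihc hc.1 hKc) (ihd hc.2 hKd)

theorem BForm.holds_iff_of_orderTypeOver_eq {φ : BForm X R} (hφ : φ.isMC)
    (hK : φ.constsIn ↑K) {v w : X → R} (h : orderTypeOver K v = orderTypeOver K w) :
    φ.holds v ↔ φ.holds w := by
  induction φ with
  | atom c => exact Constr.holds_iff_of_orderTypeOver_eq hφ hK h
  | and f g ihf ihg => exact and_congr (ihf hφ.1 hK.1) (ihg hφ.2 hK.2)
  | or f g ihf ihg => exact or_congr (ihf hφ.1 hK.1) (ihg hφ.2 hK.2)
  | not f ihf => exact not_congr (ihf hφ hK)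

theorem orderInvariant_csHolds {C : Set (Constr X R)}
    (hC : ∀ c ∈ C, c.isMC ∧ c.consts ⊆ ↑K) : OrderInvariant K (csHolds · C) :=
  fun _ _ h hv c hc =>
    (Constr.holds_iff_of_orderTypeOver_eq (hC c hc).1 (hC c hc).2 h).1 (hv c hc)

end MonotonicityConstraints

section Definability

variable {R : Type} {K : Finset R}

def BForm.conj : List (BForm X R) → BForm X R
  | [] => .atom .tru
  | φ :: l => .and φ (conj l)

def BForm.disj : List (BForm X R) → BForm X R
  | [] => .not (.atom .tru)
  | φ :: l => .or φ (disj l)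

theorem BForm.isMC_conj {S : Set R} {l : List (BForm X R)}
    (h : ∀ φ ∈ l, φ.isMC ∧ φ.constsIn S) : (conj l).isMC ∧ (conj l).constsIn S := by
  induction l with
  | nil => exact ⟨trivial, Set.empty_subset S⟩
  | cons φ l ih =>
    obtain ⟨hφ, hl⟩ := List.forall_mem_cons.1 h
    exact ⟨⟨hφ.1, (ih hl).1⟩, ⟨hφ.2, (ih hl).2⟩⟩

theorem BForm.isMC_disj {S : Set R} {l : List (BForm X R)}
    (h : ∀ φ ∈ l, φ.isMC ∧ φ.constsIn S) : (disj l).isMC ∧ (disj l).constsIn S := by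
  induction l with
  | nil => exact ⟨trivial, Set.empty_subset S⟩
  | cons φ l ih =>
    obtain ⟨hφ, hl⟩ := List.forall_mem_cons.1 h
    exact ⟨⟨hφ.1, (ih hl).1⟩, ⟨hφ.2, (ih hl).2⟩⟩

def cmpConstr (s t : Trm X R) : Ordering → Constr X R
  | .lt => .lt s t
  | .eq => .eq s t
  | .gt => .lt t s

theorem isMC_cmpConstr_indexTrm (i j : X ⊕ K) (o : Ordering) :
    (cmpConstr (indexTrm K i) (indexTrm K j) o).isMC ∧
      (cmpConstr (indexTrm K i) (indexTrm K j) o).consts ⊆ ↑K := by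
  have hatom : ∀ i : X ⊕ K, (indexTrm K i).atomic ∧ (indexTrm K i).consts ⊆ ↑K := by
    rintro (x | c)
    · exact ⟨trivial, Set.empty_subset _⟩
    · exact ⟨trivial, Set.singleton_subset_iff.2 c.2⟩
  cases o
  all_goals exact ⟨⟨(hatom _).1, (hatom _).1⟩, Set.union_subset (hatom _).2 (hatom _).2⟩

noncomputable def typeFormula [Fintype X] (K : Finset R) (t : X ⊕ K → X ⊕ K → Ordering) :
    BForm X R :=
  BForm.conj <| (Finset.univ : Finset ((X ⊕ K) × (X ⊕ K))).toList.map fun p =>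
    .atom (cmpConstr (indexTrm K p.1) (indexTrm K p.2) (t p.1 p.2))

theorem isMC_typeFormula [Fintype X] (t : X ⊕ K → X ⊕ K → Ordering) :
    (typeFormula K t).isMC ∧ (typeFormula K t).constsIn ↑K := by
  refine BForm.isMC_conj fun φ hφ => ?_
  obtain ⟨p, -, rfl⟩ := List.mem_map.1 hφ
  exact isMC_cmpConstr_indexTrm p.1 p.2 _

variable [LinearOrder R] [Add R] [Sub R]

theorem BForm.holds_conj (v : X → R) (l : List (BForm X R)) :
    (conj l).holds v ↔ ∀ φ ∈ l, φ.holds v := by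
  induction l with
  | nil => simp [conj, holds, Constr.holds]
  | cons φ l ih => simp [conj, holds, ih]

theorem BForm.holds_disj (v : X → R) (l : List (BForm X R)) :
    (disj l).holds v ↔ ∃ φ ∈ l, φ.holds v := by
  induction l with
  | nil => simp [disj, holds, Constr.holds]
  | cons φ l ih => simp [disj, holds, ih]

theorem holds_cmpConstr (v : X → R) (s t : Trm X R) (o : Ordering) :
    (cmpConstr s t o).holds v ↔ cmp (s.eval v) (t.eval v) = o := by
  cases o <;> simp [cmpConstr, Constr.holds, cmp_eq_lt_iff, cmp_eq_eq_iff, cmp_eq_gt_iff]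

theorem holds_typeFormula [Fintype X] (t : X ⊕ K → X ⊕ K → Ordering) (v : X → R) :
    (typeFormula K t).holds v ↔ orderTypeOver K v = t := by
  simp only [typeFormula, BForm.holds_conj, List.forall_mem_map, Finset.mem_toList,
    Finset.mem_univ, forall_const, Prod.forall, BForm.holds, holds_cmpConstr, eval_indexTrm,
    funext_iff]
  exact Iff.rfl

theorem OrderInvariant.exists_mc_bForm [Finite X] {P : (X → R) → Prop}
    (hP : OrderInvariant K P) :
    ∃ φ : BForm X R, φ.isMC ∧ φ.constsIn ↑K ∧ P = fun v => φ.holds v := by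
  cases nonempty_fintype X
  let T := (Set.toFinite (orderTypeOver K '' {v | P v})).toFinset
  obtain ⟨hmc, hK⟩ := BForm.isMC_disj (l := T.toList.map (typeFormula K)) fun φ hφ => by
    obtain ⟨t, -, rfl⟩ := List.mem_map.1 hφ
    exact isMC_typeFormula t
  refine ⟨_, hmc, hK, funext fun v => propext ?_⟩
  rw [hP.iff_mem_image v]
  simp only [Set.mem_image, Set.mem_ofPred_eq, BForm.holds_disj, List.mem_map,
    Finset.mem_toList, Set.Finite.mem_toFinset, exists_exists_and_eq_and, holds_typeFormula, T]
  exact exists_congr fun _ => and_congr_right fun _ => eq_comm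

end Definability

theorem mem_PhiMC_iff [Finite X] {K : Finset ℚ} {p : B × ((X → ℚ) → Prop)} :
    p ∈ PhiMC B X K ↔ OrderInvariant K p.2 := by
  refine ⟨?_, fun hp => hp.exists_mc_bForm⟩
  rintro ⟨φ, hφ, hK, hp⟩ v w h
  rw [hp]
  exact (BForm.holds_iff_of_orderTypeOver_eq hφ hK h).1

theorem finite_PhiMC [Finite B] [Finite X] (K : Finset ℚ) : (PhiMC B X K).Finite := by
  refine (Set.finite_range fun q : B × Set (X ⊕ K → X ⊕ K → Ordering) =>
    (q.1, fun v => orderTypeOver K v ∈ q.2)).subset ?_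
  rintro ⟨b, P⟩ hP
  exact ⟨(b, orderTypeOver K '' {v | P v}),
    Prod.ext rfl (funext fun v => propext ((mem_PhiMC_iff.1 hP).iff_mem_image v).symm)⟩

section DDSA

variable {R : Type} [LinearOrder R] [Add R] [Sub R] {K : Finset R}

theorem DDSA.orderInvariant_initPred (M : DDSA B A X R) {C : Set (Constr X R)}
    (ha0 : ∀ x, M.a0 x ∈ K) (hC : ∀ c ∈ C, c.isMC ∧ c.consts ⊆ ↑K) :
    OrderInvariant K (M.initPred C) := by
  rintro v w h ⟨hv, hvC⟩
  refine ⟨fun x => ?_, orderInvariant_csHolds hC h hvC⟩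
  exact (eq_iff_eq_of_cmp_eq_cmp (congrFun₂ h (.inl x) (.inr ⟨_, ha0 x⟩))).1 (hv x)

theorem DDSA.orderInvariant_deltaHolds (M : DDSA B A X R) {a : A}
    (hg : (M.guard a).isMC ∧ (M.guard a).consts ⊆ ↑K) :
    OrderInvariant K (M.deltaHolds a) := by
  rintro β γ h ⟨hβg, hβframe⟩
  refine ⟨(Constr.holds_iff_of_orderTypeOver_eq hg.1 hg.2 h).1 hβg, fun x hx => ?_⟩
  exact (eq_iff_eq_of_cmp_eq_cmp (congrFun₂ h (.inl (.inr x)) (.inl (.inl x)))).1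
    (hβframe x hx)

theorem OrderInvariant.updateSem [Finite X] [DenselyOrdered R] [NoMinOrder R] [NoMaxOrder R]
    [Nonempty R] (M : DDSA B A X R) {P : (X → R) → Prop} {a : A} (hP : OrderInvariant K P)
    (hg : (M.guard a).isMC ∧ (M.guard a).consts ⊆ ↑K) : OrderInvariant K (M.updateSem P a) :=
  ((hP.comp Sum.inl).and (M.orderInvariant_deltaHolds hg)).exists_sumElim

end DDSA

theorem mc_ddsa_finite_summary_general (B A X : Type) [Finite B] [Finite X]
    (M : DDSA B A X ℚ) (CC : Set (Constr X ℚ))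
    (Const : Finset ℚ)
    (hguard : ∀ a, (M.guard a).isMC ∧ (M.guard a).consts ⊆ ↑Const)
    (ha0 : ∀ v, M.a0 v ∈ Const)
    (hCC : ∀ c ∈ CC, c.isMC ∧ c.consts ⊆ ↑Const) :
    (PhiMC B X Const).Finite ∧ M.IsHistorySet CC (PhiMC B X Const) ∧
    M.HasFiniteSummary CC := by
  have hC : ∀ C ⊆ CC, ∀ c ∈ C, c.isMC ∧ c.consts ⊆ ↑Const :=
    fun _ hsub c hc => hCC c (hsub hc)
  have hΦ : M.IsHistorySet CC (PhiMC B X Const) := by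
    refine ⟨fun C hsub => ⟨_, ?_, fun _ => Iff.rfl⟩,
      fun _ P hP a _ _ C hsub => ⟨_, ?_, fun _ => Iff.rfl⟩⟩
    · exact mem_PhiMC_iff.2 (M.orderInvariant_initPred ha0 (hC C hsub))
    · exact mem_PhiMC_iff.2
        (((mem_PhiMC_iff.1 hP).updateSem M (hguard a)).and (orderInvariant_csHolds (hC C hsub)))
  exact ⟨finite_PhiMC Const, hΦ, _, finite_PhiMC Const, hΦ⟩

/-- Theorem 1.  If all guards of `M` are conjunctions of
monotonicity constraints over `ℚ` and `CC` is a finite set of MCs, then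
`(M, CC)` admits a finite summary; specifically `B × MC_Const` is a finite
history set, where `Const` collects the constants of `CC`, `α₀` and the
guards. -/
theorem mc_ddsa_finite_summary (B A X : Type) [Finite B] [Finite X]
    (M : DDSA B A X ℚ) (CC : Set (Constr X ℚ)) (hCCfin : CC.Finite)
    (Const : Finset ℚ) (hne : Const.Nonempty)
    (hguard : ∀ a, (M.guard a).isMC ∧ (M.guard a).consts ⊆ ↑Const)
    (ha0 : ∀ v, M.a0 v ∈ Const)
    (hCC : ∀ c ∈ CC, c.isMC ∧ c.consts ⊆ ↑Const) :
    (PhiMC B X Const).Finite ∧ M.IsHistorySet CC (PhiMC B X Const) ∧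
    M.HasFiniteSummary CC :=
  mc_ddsa_finite_summary_general B A X M CC Const hguard ha0 hCC

end DDS
end

section
/- Sequential decomposition preserves finite summary: if a DDSA B is sequentially decomposable into B₁ (with final state b) and B₂ (starting at b with symbolic initial assignment), and both (B₁, 𝒞) and (B₂, 𝒞) admit finite history sets Φ₁ and Φ₂ respectively, then Φ = Φ₁ ∪ { (b', ∃U. φ₁(U) ∧ φ₂) : (b, φ₁) ∈ Φ₁, (b', φ₂) ∈ Φ₂ } is a finite history set for (B, 𝒞), and hence (B, 𝒞) has finite summary. -/
namespace DDS

variable {B A X D : Type} [Add D] [Sub D] [LT D] [LE D]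

/-- History set conditions for the subsystem of `M` on the states `S` with
initial state `start` (and the concrete initial assignment `α₀`). -/
def DDSA.IsHistorySetOn (M : DDSA B A X D) (CC : Set (Constr X D))
    (S : Set B) (start : B) (Φ : Set (B × ((X → D) → Prop))) : Prop :=
  (∀ p ∈ Φ, Prod.fst p ∈ S) ∧
  (∀ C ⊆ CC, ∃ Q, (start, Q) ∈ Φ ∧ eqv Q (M.initPred C)) ∧
  (∀ b1 P, (b1, P) ∈ Φ → ∀ a b2, M.trans b1 a = some b2 → b2 ∈ S →
    ∀ C ⊆ CC, ∃ Q, (b2, Q) ∈ Φ ∧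
      eqv Q (fun α => M.updateSem P a α ∧ csHolds α C))

/-- History set conditions for the subsystem of `M` on the states `S` with
initial state `start` and *symbolic* initial assignment: formulas carry the
vector `u` of fresh variables `U` for the initial values (`C_{α_U}` becomes
`α = u`). -/
def DDSA.IsHistorySetSym (M : DDSA B A X D) (CC : Set (Constr X D))
    (S : Set B) (start : B)
    (Φ : Set (B × ((X → D) → (X → D) → Prop))) : Prop :=
  (∀ p ∈ Φ, Prod.fst p ∈ S) ∧
  (∀ C ⊆ CC, ∃ Q, (start, Q) ∈ Φ ∧
    ∀ u, eqv (Q u) (fun α => α = u ∧ csHolds α C)) ∧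
  (∀ b1 P, (b1, P) ∈ Φ → ∀ a b2, M.trans b1 a = some b2 → b2 ∈ S →
    ∀ C ⊆ CC, ∃ Q, (b2, Q) ∈ Φ ∧
      ∀ u, eqv (Q u) (fun α => M.updateSem (P u) a α ∧ csHolds α C))

/-- Theorem 5(a).  Sequential decomposition preserves
finite summary: if `M` is sequentially decomposable at the state `b` into a
first part on `B1` (final state `b`) and a second part on `B2` (starting at
`b` with symbolic initial assignment), and both parts admit finite history
sets `Φ1`, `Φ2`, then
`Φ = Φ1 ∪ {(b', ∃U. φ₁(U) ∧ φ₂) : (b, φ₁) ∈ Φ1, (b', φ₂) ∈ Φ2}` is a finite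
history set for `(M, CC)`, and hence `(M, CC)` has finite summary. -/
theorem sequential_decomposition (B A X D : Type)
    [Add D] [Sub D] [LT D] [LE D]
    (M : DDSA B A X D) (CC : Set (Constr X D))
    (B1 B2 : Set B) (b : B)
    (hcover : B1 ∪ B2 = Set.univ) (hinter : B1 ∩ B2 = {b})
    (hinit : M.init ∈ B1)
    (h21 : ∀ b2 ∈ B2, ∀ a b', M.trans b2 a = some b' → b' ∉ B1)
    (h12 : ∀ b1 ∈ B1, b1 ≠ b → ∀ a b', M.trans b1 a = some b' →
      b' ∉ B2 \ {b})
    (Φ1 : Set (B × ((X → D) → Prop)))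
    (Φ2 : Set (B × ((X → D) → (X → D) → Prop)))
    (hΦ1 : M.IsHistorySetOn CC B1 M.init Φ1) (h1fin : Φ1.Finite)
    (hΦ2 : M.IsHistorySetSym CC B2 b Φ2) (h2fin : Φ2.Finite) :
    (Φ1 ∪ {p | ∃ P1 P2, (b, P1) ∈ Φ1 ∧ (p.1, P2) ∈ Φ2 ∧
        p.2 = fun α => ∃ u, P1 u ∧ P2 u α} : Set (B × ((X → D) → Prop))).Finite ∧
    M.IsHistorySet CC
      (Φ1 ∪ {p | ∃ P1 P2, (b, P1) ∈ Φ1 ∧ (p.1, P2) ∈ Φ2 ∧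
        p.2 = fun α => ∃ u, P1 u ∧ P2 u α}) ∧
    M.HasFiniteSummary CC := by
  obtain ⟨h1S, h1init, h1step⟩ := hΦ1
  obtain ⟨h2S, h2init, h2step⟩ := hΦ2
  have hbB1 : b ∈ B1 := by
    have hb : b ∈ B1 ∩ B2 := by rw [hinter]; rfl
    exact hb.1
  have hcov : ∀ x, x ∉ B1 → x ∈ B2 := by
    intro x hx
    have hxu : x ∈ B1 ∪ B2 := by rw [hcover]; trivial
    exact hxu.resolve_left hx
  have hfin : (Φ1 ∪ {p | ∃ P1 P2, (b, P1) ∈ Φ1 ∧ (p.1, P2) ∈ Φ2 ∧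
      p.2 = fun α => ∃ u, P1 u ∧ P2 u α} : Set (B × ((X → D) → Prop))).Finite := by
    refine h1fin.union ?_
    have hsub : ({p | ∃ P1 P2, (b, P1) ∈ Φ1 ∧ (p.1, P2) ∈ Φ2 ∧
        p.2 = fun α => ∃ u, P1 u ∧ P2 u α} : Set (B × ((X → D) → Prop))) ⊆
        (fun q : (B × ((X → D) → Prop)) × (B × ((X → D) → (X → D) → Prop)) =>
          (q.2.1, fun α => ∃ u, q.1.2 u ∧ q.2.2 u α)) '' (Φ1 ×ˢ Φ2) := by
      rintro ⟨b', P⟩ ⟨P1, P2, h1, h2, hP⟩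
      exact ⟨((b, P1), (b', P2)), ⟨h1, h2⟩, by simp only [Prod.mk.injEq]; exact ⟨trivial, hP.symm⟩⟩
    exact ((h1fin.prod h2fin).image _).subset hsub
  have hhist : M.IsHistorySet CC
      (Φ1 ∪ {p | ∃ P1 P2, (b, P1) ∈ Φ1 ∧ (p.1, P2) ∈ Φ2 ∧
        p.2 = fun α => ∃ u, P1 u ∧ P2 u α}) := by
    constructor
    · intro C hC
      obtain ⟨Q, hQ, heq⟩ := h1init C hC
      exact ⟨Q, Or.inl hQ, heq⟩
    · intro b1 P hP a b2 htr C hC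
      rcases hP with hP1 | hPmix
      · by_cases hb2 : b2 ∈ B1
        · obtain ⟨Q, hQ, heq⟩ := h1step b1 P hP1 a b2 htr hb2 C hC
          exact ⟨Q, Or.inl hQ, heq⟩
        · have hb2' : b2 ∈ B2 := hcov b2 hb2
          have hb1 : b1 = b := by
            by_contra hne
            have hnot := h12 b1 (h1S _ hP1) hne a b2 htr
            have hb2ne : b2 ≠ b := by
              intro h; exact hb2 (h ▸ hbB1)
            exact hnot ⟨hb2', hb2ne⟩
          subst hb1
          obtain ⟨Q0, hQ0, hQ0eq⟩ := h2init ∅ (Set.empty_subset _)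
          obtain ⟨Q2, hQ2, hQ2eq⟩ := h2step _ Q0 hQ0 a b2 htr hb2' C hC
          refine ⟨fun α => ∃ u, P u ∧ Q2 u α,
            Or.inr ⟨P, Q2, hP1, hQ2, rfl⟩, ?_⟩
          intro α
          constructor
          · rintro ⟨u, hPu, hQ2u⟩
            obtain ⟨⟨β, hβ, hδ⟩, hcs⟩ := (hQ2eq u α).1 hQ2u
            obtain ⟨hβu, -⟩ := (hQ0eq u β).1 hβ
            subst hβu
            exact ⟨⟨β, hPu, hδ⟩, hcs⟩
          · rintro ⟨⟨u, hPu, hδ⟩, hcs⟩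
            refine ⟨u, hPu, (hQ2eq u α).2 ⟨⟨u, (hQ0eq u u).2 ⟨rfl, ?_⟩, hδ⟩, hcs⟩⟩
            intro c hc; exact absurd hc (Set.notMem_empty c)
      · obtain ⟨P1, P2, hP1, hP2, hPeq⟩ := hPmix
        have hPeq' : P = fun α => ∃ u, P1 u ∧ P2 u α := hPeq
        have hb1B2 : b1 ∈ B2 := h2S _ hP2
        have hb2 : b2 ∈ B2 := hcov b2 (h21 b1 hb1B2 a b2 htr)
        obtain ⟨Q2, hQ2, hQ2eq⟩ := h2step b1 P2 hP2 a b2 htr hb2 C hC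
        refine ⟨fun α => ∃ u, P1 u ∧ Q2 u α,
          Or.inr ⟨P1, Q2, hP1, hQ2, rfl⟩, ?_⟩
        intro α
        constructor
        · rintro ⟨u, hP1u, hQ2u⟩
          obtain ⟨⟨β, hβ, hδ⟩, hcs⟩ := (hQ2eq u α).1 hQ2u
          refine ⟨⟨β, ?_, hδ⟩, hcs⟩
          rw [hPeq']; exact ⟨u, hP1u, hβ⟩
        · rintro ⟨⟨β, hβ, hδ⟩, hcs⟩
          rw [hPeq'] at hβ
          obtain ⟨u, hP1u, hP2u⟩ := hβ
          exact ⟨u, hP1u, (hQ2eq u α).2 ⟨⟨β, hP2u, hδ⟩, hcs⟩⟩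
  exact ⟨hfin, hhist, _, hfin, hhist⟩

end DDS
end

section
/- Variable decomposition preserves finite summary: if (B, 𝒞) is variable-decomposable into (B₁, 𝒞|_{V₁}) and (B₂, 𝒞|_{V₂}) and each (Bᵢ, 𝒞|_{Vᵢ}) has a finite summary (Φᵢ, ∼ᵢ), then Φ = { (b, φ₁ ∧ φ₂) : (b, φ₁) ∈ Φ₁, (b, φ₂) ∈ Φ₂ } together with the relation (φ₁ ∧ φ₂) ∼ (ψ₁ ∧ ψ₂) iff φ₁ ∼₁ ψ₁ and φ₂ ∼₂ ψ₂ is a finite summary for (B, 𝒞). -/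
namespace DDS

variable {B A X D : Type} [Add D] [Sub D] [LT D] [LE D]

/-- A finite summary `(Φ, ∼)` for `(M, CC)` (Definition 8): `Φ` is a history
set, `∼` is a decidable equivalence relation containing logical equivalence,
`∼`-related formulas in `Φ` are equisatisfiable, `∼` is preserved by
`update(·, a) ∧ ⋀C`, and `∼` has finitely many classes on `Φ`. -/
def IsFiniteSummary (M : DDSA B A X D) (CC : Set (Constr X D))
    (Φ : Set (B × ((X → D) → Prop)))
    (sim : ((X → D) → Prop) → ((X → D) → Prop) → Prop) : Prop :=
  M.IsHistorySet CC Φ ∧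
  Equivalence sim ∧
  (∀ P Q : (X → D) → Prop, eqv P Q → sim P Q) ∧
  Nonempty (DecidableRel sim) ∧
  (∀ b P Q, (b, P) ∈ Φ → (b, Q) ∈ Φ → sim P Q →
    ((∃ α, P α) ↔ (∃ α, Q α))) ∧
  (∀ b P Q a b' C, (b, P) ∈ Φ → (b, Q) ∈ Φ → sim P Q →
    M.trans b a = some b' → C ⊆ CC →
    sim (fun α => M.updateSem P a α ∧ csHolds α C)
        (fun α => M.updateSem Q a α ∧ csHolds α C)) ∧
  (∃ S : Set ((X → D) → Prop), S.Finite ∧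
    ∀ b P, (b, P) ∈ Φ → ∃ Q ∈ S, sim P Q)

/-- The conjunction of two component formulas, as a formula over
`V = V₁ ⊎ V₂`. -/
def combine {X1 X2 D : Type} (p : ((X1 → D) → Prop) × ((X2 → D) → Prop)) :
    ((X1 ⊕ X2) → D) → Prop :=
  fun α => p.1 (fun x => α (Sum.inl x)) ∧ p.2 (fun x => α (Sum.inr x))

set_option maxHeartbeats 1600000 in
/-- Theorem 5(b).  Variable decomposition preserves finite
summary.  Suppose `(M, CC)` over `V = V₁ ⊎ V₂` decomposes into `(M1, CC1)`
and `(M2, CC2)`: the systems share states and transitions, `α₀` splits, every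
transition formula `Δ_a` splits as `Δ₁ ∧ Δ₂`, and `CC` splits into `CC1` and
`CC2`.  If `(Mᵢ, CCᵢ)` has finite summary `(Φᵢ, ∼ᵢ)`, then the set
`Φ = {(b, φ₁ ∧ φ₂) : (b, φ₁) ∈ Φ₁, (b, φ₂) ∈ Φ₂}` (represented here by the
pair set `ΦP`) with the componentwise relation
`(φ₁ ∧ φ₂) ∼ (ψ₁ ∧ ψ₂) iff φ₁ ∼₁ ψ₁ and φ₂ ∼₂ ψ₂` is a finite summary for
`(M, CC)`. -/
theorem variable_decomposition (B A X1 X2 D : Type)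
    [Add D] [Sub D] [LT D] [LE D]
    (M : DDSA B A (X1 ⊕ X2) D) (M1 : DDSA B A X1 D) (M2 : DDSA B A X2 D)
    (CC : Set (Constr (X1 ⊕ X2) D))
    (CC1 : Set (Constr X1 D)) (CC2 : Set (Constr X2 D))
    (hinit1 : M1.init = M.init) (hinit2 : M2.init = M.init)
    (htrans1 : ∀ b a, M1.trans b a = M.trans b a)
    (htrans2 : ∀ b a, M2.trans b a = M.trans b a)
    (ha0 : M.a0 = Sum.elim M1.a0 M2.a0)
    (hdelta : ∀ a (β : (X1 ⊕ X2) ⊕ (X1 ⊕ X2) → D),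
      M.deltaHolds a β ↔
        (M1.deltaHolds a (fun v => β (Sum.map Sum.inl Sum.inl v)) ∧
         M2.deltaHolds a (fun v => β (Sum.map Sum.inr Sum.inr v))))
    (hCCsplit : ∀ c ∈ CC,
      (∃ c1 ∈ CC1, ∀ α : (X1 ⊕ X2) → D,
        c.holds α ↔ c1.holds (fun x => α (Sum.inl x))) ∨
      (∃ c2 ∈ CC2, ∀ α : (X1 ⊕ X2) → D,
        c.holds α ↔ c2.holds (fun x => α (Sum.inr x))))
    (hCC1 : ∀ c1 ∈ CC1, ∃ c ∈ CC, ∀ α : (X1 ⊕ X2) → D,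
      c.holds α ↔ c1.holds (fun x => α (Sum.inl x)))
    (hCC2 : ∀ c2 ∈ CC2, ∃ c ∈ CC, ∀ α : (X1 ⊕ X2) → D,
      c.holds α ↔ c2.holds (fun x => α (Sum.inr x)))
    (Φ1 : Set (B × ((X1 → D) → Prop))) (sim1 : ((X1 → D) → Prop) → ((X1 → D) → Prop) → Prop)
    (Φ2 : Set (B × ((X2 → D) → Prop))) (sim2 : ((X2 → D) → Prop) → ((X2 → D) → Prop) → Prop)
    (hsum1 : IsFiniteSummary M1 CC1 Φ1 sim1)
    (hsum2 : IsFiniteSummary M2 CC2 Φ2 sim2)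
    (ΦP : Set (B × (((X1 → D) → Prop) × ((X2 → D) → Prop))))
    (hΦP : ΦP = {q | (q.1, q.2.1) ∈ Φ1 ∧ (q.1, q.2.2) ∈ Φ2})
    (simP : (((X1 → D) → Prop) × ((X2 → D) → Prop)) →
            (((X1 → D) → Prop) × ((X2 → D) → Prop)) → Prop)
    (hsimP : ∀ p q, simP p q ↔ (sim1 p.1 q.1 ∧ sim2 p.2 q.2)) :
    (∀ C ⊆ CC, ∃ p, (M.init, p) ∈ ΦP ∧ eqv (combine p) (M.initPred C)) ∧
    (∀ b p, (b, p) ∈ ΦP → ∀ a b', M.trans b a = some b' → ∀ C ⊆ CC,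
      ∃ q, (b', q) ∈ ΦP ∧
        eqv (combine q) (fun α => M.updateSem (combine p) a α ∧ csHolds α C)) ∧
    Equivalence simP ∧
    (∀ p q, eqv p.1 q.1 → eqv p.2 q.2 → simP p q) ∧
    Nonempty (DecidableRel simP) ∧
    (∀ b p q, (b, p) ∈ ΦP → (b, q) ∈ ΦP → simP p q →
      ((∃ α, combine p α) ↔ (∃ α, combine q α))) ∧
    (∀ b p q, (b, p) ∈ ΦP → (b, q) ∈ ΦP → simP p q →
      ∀ a b', M.trans b a = some b' → ∀ C1 ⊆ CC1, ∀ C2 ⊆ CC2,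
        simP (fun α1 => M1.updateSem p.1 a α1 ∧ csHolds α1 C1,
              fun α2 => M2.updateSem p.2 a α2 ∧ csHolds α2 C2)
             (fun α1 => M1.updateSem q.1 a α1 ∧ csHolds α1 C1,
              fun α2 => M2.updateSem q.2 a α2 ∧ csHolds α2 C2)) ∧
    (∃ S : Set (((X1 → D) → Prop) × ((X2 → D) → Prop)), S.Finite ∧
      ∀ b p, (b, p) ∈ ΦP → ∃ q ∈ S, simP p q) := by
  subst hΦP
  obtain ⟨hhs1, heq1, hcont1, hdec1, hsat1, hpres1, S1, hS1fin, hS1⟩ := hsum1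
  obtain ⟨hhs2, heq2, hcont2, hdec2, hsat2, hpres2, S2, hS2fin, hS2⟩ := hsum2
  -- splitting of constraint sets
  have csSplit : ∀ C ⊆ CC, ∃ C1 C2, C1 ⊆ CC1 ∧ C2 ⊆ CC2 ∧
      ∀ α : (X1 ⊕ X2) → D, csHolds α C ↔
        (csHolds (fun x => α (Sum.inl x)) C1 ∧ csHolds (fun x => α (Sum.inr x)) C2) := by
    intro C hC
    refine ⟨{c1 | c1 ∈ CC1 ∧ ∃ c ∈ C, ∀ α : (X1 ⊕ X2) → D,
              c.holds α ↔ c1.holds (fun x => α (Sum.inl x))},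
            {c2 | c2 ∈ CC2 ∧ ∃ c ∈ C, ∀ α : (X1 ⊕ X2) → D,
              c.holds α ↔ c2.holds (fun x => α (Sum.inr x))},
            fun c1 h => h.1, fun c2 h => h.1, ?_⟩
    intro α
    constructor
    · intro h
      refine ⟨?_, ?_⟩
      · rintro c1 ⟨_, c, hcC, hiff⟩
        exact (hiff α).1 (h c hcC)
      · rintro c2 ⟨_, c, hcC, hiff⟩
        exact (hiff α).1 (h c hcC)
    · rintro ⟨h1, h2⟩ c hc
      rcases hCCsplit c (hC hc) with ⟨c1, hc1, hiff⟩ | ⟨c2, hc2, hiff⟩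
      · exact (hiff α).2 (h1 c1 ⟨hc1, c, hc, hiff⟩)
      · exact (hiff α).2 (h2 c2 ⟨hc2, c, hc, hiff⟩)
  -- splitting of update
  have updSplit : ∀ (p : ((X1 → D) → Prop) × ((X2 → D) → Prop)) (a : A)
      (α : (X1 ⊕ X2) → D),
      M.updateSem (combine p) a α ↔
        (M1.updateSem p.1 a (fun x => α (Sum.inl x)) ∧
         M2.updateSem p.2 a (fun x => α (Sum.inr x))) := by
    intro p a α
    constructor
    · rintro ⟨α0, ⟨hp1, hp2⟩, hd⟩
      rw [hdelta] at hd
      obtain ⟨hd1, hd2⟩ := hd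
      have e1 : (fun v => Sum.elim α0 α (Sum.map Sum.inl Sum.inl v))
          = Sum.elim (fun x => α0 (Sum.inl x)) (fun x => α (Sum.inl x)) := by
        funext v; cases v <;> rfl
      have e2 : (fun v => Sum.elim α0 α (Sum.map Sum.inr Sum.inr v))
          = Sum.elim (fun x => α0 (Sum.inr x)) (fun x => α (Sum.inr x)) := by
        funext v; cases v <;> rfl
      exact ⟨⟨fun x => α0 (Sum.inl x), hp1, e1 ▸ hd1⟩,
             ⟨fun x => α0 (Sum.inr x), hp2, e2 ▸ hd2⟩⟩
    · rintro ⟨⟨α1, hp1, hd1⟩, ⟨α2, hp2, hd2⟩⟩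
      refine ⟨Sum.elim α1 α2, ⟨hp1, hp2⟩, ?_⟩
      rw [hdelta]
      have e1 : (fun v => Sum.elim (Sum.elim α1 α2) α (Sum.map Sum.inl Sum.inl v))
          = Sum.elim α1 (fun x => α (Sum.inl x)) := by
        funext v; cases v <;> rfl
      have e2 : (fun v => Sum.elim (Sum.elim α1 α2) α (Sum.map Sum.inr Sum.inr v))
          = Sum.elim α2 (fun x => α (Sum.inr x)) := by
        funext v; cases v <;> rfl
      exact ⟨e1.symm ▸ hd1, e2.symm ▸ hd2⟩
  -- satisfiability of a combined formula
  have combSat : ∀ p : ((X1 → D) → Prop) × ((X2 → D) → Prop),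
      (∃ α, combine p α) ↔ ((∃ a1, p.1 a1) ∧ (∃ a2, p.2 a2)) := by
    intro p
    constructor
    · rintro ⟨α, h1, h2⟩
      exact ⟨⟨_, h1⟩, ⟨_, h2⟩⟩
    · rintro ⟨⟨α1, h1⟩, ⟨α2, h2⟩⟩
      exact ⟨Sum.elim α1 α2, h1, h2⟩
  refine ⟨?_, ?_, ?_, ?_, ?_, ?_, ?_, ?_⟩
  · -- initial constraints
    intro C hC
    obtain ⟨C1, C2, hC1, hC2, hCs⟩ := csSplit C hC
    obtain ⟨Q1, hQ1, hQ1e⟩ := hhs1.1 C1 hC1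
    obtain ⟨Q2, hQ2, hQ2e⟩ := hhs2.1 C2 hC2
    refine ⟨(Q1, Q2), ⟨by rw [hinit1] at hQ1; exact hQ1, by rw [hinit2] at hQ2; exact hQ2⟩, ?_⟩
    intro α
    have h1 := hQ1e (fun x => α (Sum.inl x))
    have h2 := hQ2e (fun x => α (Sum.inr x))
    have ha : (∀ v, α v = M.a0 v) ↔
        ((∀ v, α (Sum.inl v) = M1.a0 v) ∧ (∀ v, α (Sum.inr v) = M2.a0 v)) := by
      rw [ha0]
      constructor
      · intro h; exact ⟨fun v => h (Sum.inl v), fun v => h (Sum.inr v)⟩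
      · rintro ⟨g1, g2⟩ v; cases v
        · exact g1 _
        · exact g2 _
    have hc := hCs α
    simp only [combine, DDSA.initPred] at h1 h2 ⊢
    rw [h1, h2, ha, hc]
    tauto
  · -- update closure
    rintro b p ⟨hp1, hp2⟩ a b' htr C hC
    obtain ⟨C1, C2, hC1, hC2, hCs⟩ := csSplit C hC
    obtain ⟨Q1, hQ1, hQ1e⟩ := hhs1.2 b p.1 hp1 a b' ((htrans1 b a).trans htr) C1 hC1
    obtain ⟨Q2, hQ2, hQ2e⟩ := hhs2.2 b p.2 hp2 a b' ((htrans2 b a).trans htr) C2 hC2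
    refine ⟨(Q1, Q2), ⟨hQ1, hQ2⟩, ?_⟩
    intro α
    have h1 := hQ1e (fun x => α (Sum.inl x))
    have h2 := hQ2e (fun x => α (Sum.inr x))
    have hu := updSplit p a α
    have hc := hCs α
    simp only [combine]
    rw [h1, h2, hu, hc]
    tauto
  · -- equivalence
    refine ⟨fun p => (hsimP p p).2 ⟨heq1.refl _, heq2.refl _⟩, ?_, ?_⟩
    · intro p q h
      obtain ⟨g1, g2⟩ := (hsimP p q).1 h
      exact (hsimP q p).2 ⟨heq1.symm g1, heq2.symm g2⟩
    · intro p q r h h'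
      obtain ⟨g1, g2⟩ := (hsimP p q).1 h
      obtain ⟨g1', g2'⟩ := (hsimP q r).1 h'
      exact (hsimP p r).2 ⟨heq1.trans g1 g1', heq2.trans g2 g2'⟩
  · -- contains eqv
    intro p q h1 h2
    exact (hsimP p q).2 ⟨hcont1 _ _ h1, hcont2 _ _ h2⟩
  · -- decidability
    obtain ⟨d1⟩ := hdec1
    obtain ⟨d2⟩ := hdec2
    exact ⟨fun p q => @decidable_of_iff _ _ (hsimP p q).symm
      (@instDecidableAnd _ _ (d1 p.1 q.1) (d2 p.2 q.2))⟩
  · -- equisatisfiability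
    rintro b p q ⟨hp1, hp2⟩ ⟨hq1, hq2⟩ hs
    obtain ⟨g1, g2⟩ := (hsimP p q).1 hs
    rw [combSat, combSat, hsat1 b p.1 q.1 hp1 hq1 g1, hsat2 b p.2 q.2 hp2 hq2 g2]
  · -- preservation by updates
    rintro b p q ⟨hp1, hp2⟩ ⟨hq1, hq2⟩ hs a b' htr C1 hC1 C2 hC2
    obtain ⟨g1, g2⟩ := (hsimP p q).1 hs
    refine (hsimP _ _).2 ⟨?_, ?_⟩
    · exact hpres1 b p.1 q.1 a b' C1 hp1 hq1 g1 ((htrans1 b a).trans htr) hC1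
    · exact hpres2 b p.2 q.2 a b' C2 hp2 hq2 g2 ((htrans2 b a).trans htr) hC2
  · -- finitely many classes
    refine ⟨S1 ×ˢ S2, hS1fin.prod hS2fin, ?_⟩
    rintro b p ⟨hp1, hp2⟩
    obtain ⟨Q1, hQ1S, hQ1⟩ := hS1 b p.1 hp1
    obtain ⟨Q2, hQ2S, hQ2⟩ := hS2 b p.2 hp2
    exact ⟨(Q1, Q2), ⟨hQ1S, hQ2S⟩, (hsimP _ _).2 ⟨hQ1, hQ2⟩⟩


end DDS
end

section
/- Let B be a DDSA with finite summary (Φ, ∼) for constraint set 𝒞, ψ ∈ L, and N_B^ψ the product automaton of B (extended with a dummy initial transition) and the NFA N_ψ. Then the language of N_B^ψ is non-empty if and only if there exists a run of B ending in a final state that satisfies ψ (a witness for ψ). -/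
namespace DDS

variable {B A X D : Type} [Add D] [Sub D] [LT D] [LE D]

/-- The verification language `L` (constraints, states, conjunction,
disjunction, `⟨a⟩`, `⟨·⟩`, `◇`, `□`, `U`), after the preprocessing step that
introduces action propositions. -/
inductive LF (B A X D : Type) where
  | constr : Constr X D → LF B A X D
  | state : B → LF B A X D
  | act : A → LF B A X D
  | and : LF B A X D → LF B A X D → LF B A X D
  | or : LF B A X D → LF B A X D → LF B A X D
  | diaA : A → LF B A X D → LF B A X D
  | next : LF B A X D → LF B A X D
  | ev : LF B A X D → LF B A X D
  | glob : LF B A X D → LF B A X D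
  | untl : LF B A X D → LF B A X D → LF B A X D

/-- The constraint atoms occurring in a formula. -/
def LF.constrs {B A X D : Type} : LF B A X D → Set (Constr X D)
  | .constr c => {c}
  | .state _ => ∅
  | .act _ => ∅
  | .and f g => f.constrs ∪ g.constrs
  | .or f g => f.constrs ∪ g.constrs
  | .diaA _ f => f.constrs
  | .next f => f.constrs
  | .ev f => f.constrs
  | .glob f => f.constrs
  | .untl f g => f.constrs ∪ g.constrs

/-- A finite run, represented by the list of its steps (action taken, state
and assignment reached); the run starts in `(M.init, M.a0)`. -/
def confAt (M : DDSA B A X D) (steps : List (A × B × (X → D))) :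
    ℕ → B × (X → D)
  | 0 => (M.init, M.a0)
  | k + 1 =>
    match steps[k]? with
    | some t => (t.2.1, t.2.2)
    | none => (M.init, M.a0)

/-- `steps` is a run of `M` from the initial configuration. -/
def DDSA.IsRun (M : DDSA B A X D) (steps : List (A × B × (X → D))) : Prop :=
  ∀ k t, steps[k]? = some t →
    M.step (confAt M steps k).1 (confAt M steps k).2 t.1 t.2.1 t.2.2

/-- Finite-trace semantics `ρ, i ⊨ ψ` (Definition 5). -/
def Sat (M : DDSA B A X D) (steps : List (A × B × (X → D))) :
    LF B A X D → ℕ → Prop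
  | .constr c, i => c.holds (confAt M steps i).2
  | .state b, i => (confAt M steps i).1 = b
  | .act a, i => 1 ≤ i ∧ ∃ t, steps[i - 1]? = some t ∧ t.1 = a
  | .and f g, i => Sat M steps f i ∧ Sat M steps g i
  | .or f g, i => Sat M steps f i ∨ Sat M steps g i
  | .diaA a f, i => (∃ t, steps[i]? = some t ∧ t.1 = a) ∧ Sat M steps f (i + 1)
  | .next f, i => i < steps.length ∧ Sat M steps f (i + 1)
  | .ev f, i => ∃ j, i ≤ j ∧ j ≤ steps.length ∧ Sat M steps f j
  | .glob f, i => ∀ j, i ≤ j → j ≤ steps.length → Sat M steps f j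
  | .untl f g, i => ∃ j, i ≤ j ∧ j ≤ steps.length ∧ Sat M steps g j ∧
      ∀ k, i ≤ k → k < j → Sat M steps f k

/-- The alphabet symbols `S = B ∪ A ∪ CC`. -/
abbrev Sym (B A X D : Type) := B ⊕ (A ⊕ Constr X D)

/-- Transition labels of the `δ` construction: a set of symbols together with
a set of `last`-markers (`true` = `λ`, `false` = `¬λ`). -/
abbrev Lab (B A X D : Type) := Set (Sym B A X D) × Set Bool

/-- Quoted formulas (NFA states): `⊤`, `⊥`, or a quoted formula of `L`. -/
inductive QF (B A X D : Type) where
  | tru : QF B A X D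
  | fls : QF B A X D
  | of : LF B A X D → QF B A X D

/-- Simplifying conjunction of quoted formulas. -/
def qand {B A X D : Type} : QF B A X D → QF B A X D → QF B A X D
  | .fls, _ => .fls
  | _, .fls => .fls
  | .tru, q => q
  | q, .tru => q
  | .of f, .of g => .of (.and f g)

/-- Simplifying disjunction of quoted formulas. -/
def qor {B A X D : Type} : QF B A X D → QF B A X D → QF B A X D
  | .tru, _ => .tru
  | _, .tru => .tru
  | .fls, q => q
  | q, .fls => q
  | .of f, .of g => .of (.or f g)

def datom {B A X D : Type} (s : Sym B A X D) :
    Set (QF B A X D × Lab B A X D) :=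
  {(QF.tru, ({s}, ∅)), (QF.fls, (∅, ∅))}

def dand {B A X D : Type} (R1 R2 : Set (QF B A X D × Lab B A X D)) :
    Set (QF B A X D × Lab B A X D) :=
  {p | ∃ q1 l1 q2 l2, (q1, l1) ∈ R1 ∧ (q2, l2) ∈ R2 ∧
    p = (qand q1 q2, (l1.1 ∪ l2.1, l1.2 ∪ l2.2))}

def dor {B A X D : Type} (R1 R2 : Set (QF B A X D × Lab B A X D)) :
    Set (QF B A X D × Lab B A X D) :=
  {p | ∃ q1 l1 q2 l2, (q1, l1) ∈ R1 ∧ (q2, l2) ∈ R2 ∧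
    p = (qor q1 q2, (l1.1 ∪ l2.1, l1.2 ∪ l2.2))}

def dnext {B A X D : Type} (q : QF B A X D) :
    Set (QF B A X D × Lab B A X D) :=
  {(q, (∅, {false})), (QF.fls, (∅, {true}))}

def dlast {B A X D : Type} : Set (QF B A X D × Lab B A X D) :=
  {(QF.tru, (∅, {true})), (QF.fls, (∅, {false}))}

/-- The function `δ` of the NFA construction. -/
def delta {B A X D : Type} : LF B A X D → Set (QF B A X D × Lab B A X D)
  | .constr c => datom (Sum.inr (Sum.inr c))
  | .state b => datom (Sum.inl b)
  | .act a => datom (Sum.inr (Sum.inl a))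
  | .and f g => dand (delta f) (delta g)
  | .or f g => dor (delta f) (delta g)
  | .diaA a f => dnext (QF.of (LF.and (LF.act a) f))
  | .next f => dnext (QF.of f)
  | .ev f => dor (delta f) (dnext (QF.of (LF.ev f)))
  | .glob f => dand (delta f) (dor (dnext (QF.of (LF.glob f))) dlast)
  | .untl f g => dor (delta g) (dand (delta f) (dnext (QF.of (LF.untl f g))))

def deltaQ {B A X D : Type} : QF B A X D → Set (QF B A X D × Lab B A X D)
  | .tru => {(QF.tru, (∅, ∅))}
  | .fls => {(QF.fls, (∅, ∅))}
  | .of f => delta f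

/-- Transition relation of the NFA `N_ψ` (Definition 10): `last`-markers are
stripped from the labels, transitions carrying both `λ` and `¬λ` are dropped,
and `λ`-labelled transitions into `⊤` are redirected to the extra accepting
sink `q_e` (`Sum.inr ()`). -/
def nfaTrans {B A X D : Type} (s : QF B A X D ⊕ Unit)
    (w : Set (Sym B A X D)) (s' : QF B A X D ⊕ Unit) : Prop :=
  ∃ (q q' : QF B A X D) (l : Lab B A X D),
    s = Sum.inl q ∧ (q', l) ∈ deltaQ q ∧ w = l.1 ∧
    ¬(true ∈ l.2 ∧ false ∈ l.2) ∧
    ((true ∉ l.2 ∧ s' = Sum.inl q') ∨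
     (true ∈ l.2 ∧ q' = QF.tru ∧ s' = Sum.inr ()))

inductive NfaSteps {B A X D : Type} :
    (QF B A X D ⊕ Unit) → List (Set (Sym B A X D)) → (QF B A X D ⊕ Unit) → Prop where
  | nil (s : QF B A X D ⊕ Unit) : NfaSteps s [] s
  | cons {s s' s'' : QF B A X D ⊕ Unit} {w : Set (Sym B A X D)}
      {ws : List (Set (Sym B A X D))} :
      nfaTrans s w s' → NfaSteps s' ws s'' → NfaSteps s (w :: ws) s''

/-- The NFA `N_ψ` accepts the word `w` (final states: `⊤` and `q_e`). -/
def Accepts {B A X D : Type} (ψ : LF B A X D)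
    (w : List (Set (Sym B A X D))) : Prop :=
  ∃ s', NfaSteps (Sum.inl (QF.of ψ)) w s' ∧
    (s' = Sum.inl QF.tru ∨ s' = Sum.inr ())

/-- Consistency of a word with a run: the word has one symbol per position of
the run, it mentions no state or action symbols contradicting the run, and
the assignment at each position satisfies the constraint symbols. -/
def ConsistentWord (M : DDSA B A X D) (steps : List (A × B × (X → D)))
    (w : List (Set (Sym B A X D))) : Prop :=
  w.length = steps.length + 1 ∧
  ∀ i ς, w[i]? = some ς →
    (∀ b', Sum.inl b' ∈ ς → b' = (confAt M steps i).1) ∧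
    (∀ a', Sum.inr (Sum.inl a') ∈ ς → 1 ≤ i →
      ∃ t, steps[i - 1]? = some t ∧ t.1 = a') ∧
    (∀ c, Sum.inr (Sum.inr c) ∈ ς → c.holds (confAt M steps i).2)

/-- `M` extended with a dummy initial state `b₀'` (`none`) and a fresh action
`a₀` (`none`) with guard `⊤` leading to the original initial state. -/
def extD (M : DDSA B A X D) : DDSA (Option B) (Option A) X D where
  init := none
  trans := fun b? a? =>
    match b?, a? with
    | none, none => some (some M.init)
    | some b, some a => (M.trans b a).map some
    | _, _ => none
  final := {b? | ∃ bf ∈ M.final, b? = some bf}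
  a0 := M.a0
  guard := fun a? => match a? with | none => Constr.tru | some a => M.guard a

/-- A transition of the product automaton `N_B^ψ` (Definition 12): the
(extended) DDSA takes a transition, the NFA takes a transition whose label is
consistent with it, the formula `χ = update(φ, a) ∧ ⋀ constr(ς)` is
satisfiable, and the new formula component is a `∼`-representative of `χ`
belonging to the history set `Φ`. -/
def prodStep (M : DDSA B A X D) (Φ : Set (B × ((X → D) → Prop)))
    (sim : ((X → D) → Prop) → ((X → D) → Prop) → Prop)
    (p p' : Option B × (QF B A X D ⊕ Unit) × ((X → D) → Prop)) : Prop :=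
  ∃ (a : Option A) (b'' : B) (ς : Set (Sym B A X D)),
    (extD M).trans p.1 a = some (some b'') ∧ p'.1 = some b'' ∧
    nfaTrans p.2.1 ς p'.2.1 ∧
    (∀ b0, Sum.inl b0 ∈ ς → b0 = b'') ∧
    (∀ a0, Sum.inr (Sum.inl a0) ∈ ς → a = some a0) ∧
    (∃ α, (extD M).updateSem p.2.2 a α ∧
      ∀ c, Sum.inr (Sum.inr c) ∈ ς → c.holds α) ∧
    sim p'.2.2 (fun α => (extD M).updateSem p.2.2 a α ∧
      ∀ c, Sum.inr (Sum.inr c) ∈ ς → c.holds α) ∧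
    (b'', p'.2.2) ∈ Φ

/-!
Both directions compare product paths with runs of `M`, letter by letter of the word
read by `N_ψ`. Soundness and completeness of `N_ψ` follow by induction on formulas from
the one-step expansion laws of the temporal operators, once it is fixed which target
states of `δ` hold at the next position.

From a witness run, completeness of `N_ψ` gives an accepting word whose letters hold
along the run; the product automaton follows run and word in lockstep, entering at each
step the member of `Φ` equivalent to the exact update, which the run's current
assignment satisfies.

Conversely, along a product path we carry, next to the representative `P`, a member `Q`
of `Φ` with `P ∼ Q` each solution of which is the final assignment of a run on which the
word read so far holds. Since `∼` is compatible with updates this survives every step,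
and since `∼`-equivalent members of `Φ` are equisatisfiable, the satisfiable final `P`
yields such a run, which satisfies `ψ` by soundness of `N_ψ`.
-/

def Sym.toLF : Sym B A X D → LF B A X D
  | .inl b => .state b
  | .inr (.inl a) => .act a
  | .inr (.inr c) => .constr c

def QF.constrs : QF B A X D → Set (Constr X D)
  | .of f => f.constrs
  | _ => ∅

def LetterHolds (M : DDSA B A X D) (steps : List (A × B × (X → D))) (i : ℕ)
    (ς : Set (Sym B A X D)) : Prop :=
  ∀ s ∈ ς, Sat M steps s.toLF i

/-- Besides `ρ, i ⊨ f`, the NFA state `⌜f⌝` asserts that `i` is a position of the run. -/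
def SatQ (M : DDSA B A X D) (steps : List (A × B × (X → D))) :
    QF B A X D → ℕ → Prop
  | .tru, _ => True
  | .fls, _ => False
  | .of f, i => i ≤ steps.length ∧ Sat M steps f i

section Expansion

variable {M : DDSA B A X D} {steps : List (A × B × (X → D))} {i : ℕ}

theorem satQ_qand {q₁ q₂ : QF B A X D} :
    SatQ M steps (qand q₁ q₂) i ↔ SatQ M steps q₁ i ∧ SatQ M steps q₂ i := by
  cases q₁ <;> cases q₂ <;> simp only [qand, SatQ, Sat] <;> tauto

theorem satQ_qor {q₁ q₂ : QF B A X D} :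
    SatQ M steps (qor q₁ q₂) i ↔ SatQ M steps q₁ i ∨ SatQ M steps q₂ i := by
  cases q₁ <;> cases q₂ <;> simp only [qor, SatQ, Sat] <;> tauto

theorem eq_tru_of_satQ_length_add_one {q : QF B A X D}
    (h : SatQ M steps q (steps.length + 1)) : q = .tru := by
  cases q with
  | tru => rfl
  | fls => exact h.elim
  | of f => exact absurd h.1 (by omega)

theorem sat_next_iff {f : LF B A X D} :
    Sat M steps (.next f) i ↔ SatQ M steps (.of f) (i + 1) := Iff.rfl

theorem sat_diaA_iff {a : A} {f : LF B A X D} :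
    Sat M steps (.diaA a f) i ↔ SatQ M steps (.of (.and (.act a) f)) (i + 1) := by
  simp only [Sat, SatQ, Nat.add_sub_cancel]
  constructor
  · rintro ⟨⟨t, ht, rfl⟩, hf⟩
    exact ⟨List.getElem?_eq_some_iff.1 ht |>.1, ⟨by omega, t, ht, rfl⟩, hf⟩
  · rintro ⟨-, ⟨-, ht⟩, hf⟩
    exact ⟨ht, hf⟩

theorem sat_ev_iff (hi : i ≤ steps.length) {f : LF B A X D} :
    Sat M steps (.ev f) i ↔ Sat M steps f i ∨ SatQ M steps (.of (.ev f)) (i + 1) := by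
  simp only [Sat, SatQ]
  constructor
  · rintro ⟨j, hij, hj, hf⟩
    rcases hij.eq_or_lt with rfl | hij
    · exact .inl hf
    · exact .inr ⟨by omega, j, hij, hj, hf⟩
  · rintro (hf | ⟨-, j, hij, hj, hf⟩)
    · exact ⟨i, le_rfl, hi, hf⟩
    · exact ⟨j, by omega, hj, hf⟩

theorem sat_glob_iff (hi : i ≤ steps.length) {f : LF B A X D} :
    Sat M steps (.glob f) i ↔
      Sat M steps f i ∧ (SatQ M steps (.of (.glob f)) (i + 1) ∨ i = steps.length) := by
  simp only [Sat, SatQ]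
  constructor
  · intro h
    refine ⟨h i le_rfl hi, ?_⟩
    rcases hi.lt_or_eq with hi | hi
    · exact .inl ⟨hi, fun j hij hj => h j (by omega) hj⟩
    · exact .inr hi
  · rintro ⟨hf, ⟨-, h⟩ | rfl⟩ j hij hj
    · rcases hij.eq_or_lt with rfl | hij
      exacts [hf, h j hij hj]
    · rwa [le_antisymm hj hij]

theorem sat_untl_iff (hi : i ≤ steps.length) {f g : LF B A X D} :
    Sat M steps (.untl f g) i ↔
      Sat M steps g i ∨ Sat M steps f i ∧ SatQ M steps (.of (.untl f g)) (i + 1) := by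
  simp only [Sat, SatQ]
  constructor
  · rintro ⟨j, hij, hj, hg, hf⟩
    rcases hij.eq_or_lt with rfl | hij
    · exact .inl hg
    · exact .inr ⟨hf i le_rfl hij, by omega, j, hij, hj, hg,
        fun k hk hkj => hf k (by omega) hkj⟩
  · rintro (hg | ⟨hf, -, j, hij, hj, hg, hf'⟩)
    · exact ⟨i, le_rfl, hi, hg, fun k hk hki => absurd hki (by omega)⟩
    · refine ⟨j, by omega, hj, hg, fun k hk hkj => ?_⟩
      rcases hk.eq_or_lt with rfl | hk
      exacts [hf, hf' k hk hkj]

end Expansion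

section Transitions

variable {M : DDSA B A X D} {steps : List (A × B × (X → D))} {i : ℕ}
  {R R₁ R₂ : Set (QF B A X D × Lab B A X D)} {φ φ' φ₁ φ₂ : Prop}

variable (M steps i)

def TransSound (R : Set (QF B A X D × Lab B A X D)) (φ : Prop) : Prop :=
  ∀ x ∈ R, LetterHolds M steps i x.2.1 → (true ∈ x.2.2 → i = steps.length) →
    SatQ M steps x.1 (i + 1) → φ

/-- The marker `true` (`λ`) is allowed only at the last position of the run,
`false` (`¬λ`) only at the others. -/
def LabelFits (l : Lab B A X D) : Prop :=
  LetterHolds M steps i l.1 ∧ (true ∈ l.2 → i = steps.length) ∧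
    (false ∈ l.2 → i < steps.length)

def TransComplete (R : Set (QF B A X D × Lab B A X D)) (φ : Prop) : Prop :=
  ∃ x ∈ R, LabelFits M steps i x.2 ∧ (φ → SatQ M steps x.1 (i + 1))

variable {M steps i}

theorem labelFits_empty : LabelFits M steps i (∅, ∅) :=
  ⟨fun _ h => h.elim, fun h => h.elim, fun h => h.elim⟩

theorem LabelFits.union {l₁ l₂ : Lab B A X D} (h₁ : LabelFits M steps i l₁)
    (h₂ : LabelFits M steps i l₂) : LabelFits M steps i (l₁.1 ∪ l₂.1, l₁.2 ∪ l₂.2) := by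
  obtain ⟨hS₁, ht₁, hf₁⟩ := h₁
  obtain ⟨hS₂, ht₂, hf₂⟩ := h₂
  refine ⟨?_, ?_, ?_⟩
  · rintro s (hs | hs)
    exacts [hS₁ s hs, hS₂ s hs]
  · rintro (h | h)
    exacts [ht₁ h, ht₂ h]
  · rintro (h | h)
    exacts [hf₁ h, hf₂ h]

theorem TransSound.mono (h : TransSound M steps i R φ) (hφ : φ → φ') :
    TransSound M steps i R φ' :=
  fun x hx hS hm hq => hφ (h x hx hS hm hq)

theorem TransComplete.mono (h : TransComplete M steps i R φ) (hφ : φ' → φ) :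
    TransComplete M steps i R φ' :=
  let ⟨x, hx, hfit, hq⟩ := h
  ⟨x, hx, hfit, hq ∘ hφ⟩

theorem transSound_datom (s : Sym B A X D) :
    TransSound M steps i (datom s) (Sat M steps s.toLF i) := by
  rintro x (rfl | rfl) hS - hq
  · exact hS s rfl
  · exact hq.elim

theorem transComplete_datom (s : Sym B A X D) :
    TransComplete M steps i (datom s) (Sat M steps s.toLF i) := by
  by_cases hs : Sat M steps s.toLF i
  · exact ⟨_, .inl rfl, ⟨fun _ h => h ▸ hs, fun h => h.elim, fun h => h.elim⟩,
      fun _ => trivial⟩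
  · exact ⟨_, .inr rfl, labelFits_empty, fun h => (hs h).elim⟩

theorem TransSound.dand (h₁ : TransSound M steps i R₁ φ₁) (h₂ : TransSound M steps i R₂ φ₂) :
    TransSound M steps i (dand R₁ R₂) (φ₁ ∧ φ₂) := by
  rintro _ ⟨q₁, l₁, q₂, l₂, hx₁, hx₂, rfl⟩ hS hm hq
  obtain ⟨hq₁, hq₂⟩ := satQ_qand.1 hq
  exact ⟨h₁ _ hx₁ (fun s hs => hS s (.inl hs)) (fun h => hm (.inl h)) hq₁,
    h₂ _ hx₂ (fun s hs => hS s (.inr hs)) (fun h => hm (.inr h)) hq₂⟩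

theorem TransSound.dor (h₁ : TransSound M steps i R₁ φ₁) (h₂ : TransSound M steps i R₂ φ₂) :
    TransSound M steps i (dor R₁ R₂) (φ₁ ∨ φ₂) := by
  rintro _ ⟨q₁, l₁, q₂, l₂, hx₁, hx₂, rfl⟩ hS hm hq
  rcases satQ_qor.1 hq with hq₁ | hq₂
  · exact .inl (h₁ _ hx₁ (fun s hs => hS s (.inl hs)) (fun h => hm (.inl h)) hq₁)
  · exact .inr (h₂ _ hx₂ (fun s hs => hS s (.inr hs)) (fun h => hm (.inr h)) hq₂)

theorem TransComplete.dand (h₁ : TransComplete M steps i R₁ φ₁)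
    (h₂ : TransComplete M steps i R₂ φ₂) :
    TransComplete M steps i (dand R₁ R₂) (φ₁ ∧ φ₂) :=
  let ⟨x₁, hx₁, hfit₁, hq₁⟩ := h₁
  let ⟨x₂, hx₂, hfit₂, hq₂⟩ := h₂
  ⟨_, ⟨x₁.1, x₁.2, x₂.1, x₂.2, hx₁, hx₂, rfl⟩, hfit₁.union hfit₂,
    fun h => satQ_qand.2 ⟨hq₁ h.1, hq₂ h.2⟩⟩

theorem TransComplete.dor (h₁ : TransComplete M steps i R₁ φ₁)
    (h₂ : TransComplete M steps i R₂ φ₂) :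
    TransComplete M steps i (dor R₁ R₂) (φ₁ ∨ φ₂) :=
  let ⟨x₁, hx₁, hfit₁, hq₁⟩ := h₁
  let ⟨x₂, hx₂, hfit₂, hq₂⟩ := h₂
  ⟨_, ⟨x₁.1, x₁.2, x₂.1, x₂.2, hx₁, hx₂, rfl⟩, hfit₁.union hfit₂,
    fun h => satQ_qor.2 (h.imp hq₁ hq₂)⟩

theorem transSound_dnext (q : QF B A X D) :
    TransSound M steps i (dnext q) (SatQ M steps q (i + 1)) := by
  rintro x (rfl | rfl) - - hq
  exacts [hq, hq.elim]

theorem transComplete_dnext (hi : i ≤ steps.length) (f : LF B A X D) :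
    TransComplete M steps i (dnext (.of f)) (SatQ M steps (.of f) (i + 1)) := by
  rcases hi.lt_or_eq with hi | rfl
  · exact ⟨_, .inl rfl, ⟨fun _ h => h.elim, fun h => absurd h (by simp), fun _ => hi⟩, id⟩
  · exact ⟨_, .inr rfl, ⟨fun _ h => h.elim, fun _ => rfl, fun h => absurd h (by simp)⟩,
      fun h => absurd h.1 (by omega)⟩

theorem transSound_dlast : TransSound M steps i dlast (i = steps.length) := by
  rintro x (rfl | rfl) - hm hq
  exacts [hm rfl, hq.elim]

theorem transComplete_dlast (hi : i ≤ steps.length) :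
    TransComplete M steps i dlast (i = steps.length) := by
  rcases hi.lt_or_eq with hi | rfl
  · exact ⟨_, .inr rfl, ⟨fun _ h => h.elim, fun h => absurd h (by simp), fun _ => hi⟩,
      fun h => absurd h hi.ne⟩
  · exact ⟨_, .inl rfl, ⟨fun _ h => h.elim, fun _ => rfl, fun h => absurd h (by simp)⟩,
      fun _ => trivial⟩

theorem transSound_delta (hi : i ≤ steps.length) (f : LF B A X D) :
    TransSound M steps i (delta f) (Sat M steps f i) := by
  induction f with
  | constr c => exact transSound_datom (.inr (.inr c))
  | state b => exact transSound_datom (.inl b)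
  | act a => exact transSound_datom (.inr (.inl a))
  | and f g ihf ihg => exact ihf.dand ihg
  | or f g ihf ihg => exact ihf.dor ihg
  | diaA a f => exact (transSound_dnext _).mono sat_diaA_iff.2
  | next f => exact (transSound_dnext _).mono sat_next_iff.2
  | ev f ihf => exact (ihf.dor (transSound_dnext _)).mono (sat_ev_iff hi).2
  | glob f ihf =>
    exact (ihf.dand ((transSound_dnext _).dor transSound_dlast)).mono (sat_glob_iff hi).2
  | untl f g ihf ihg =>
    exact (ihg.dor (ihf.dand (transSound_dnext _))).mono (sat_untl_iff hi).2

theorem transComplete_delta (hi : i ≤ steps.length) (f : LF B A X D) :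
    TransComplete M steps i (delta f) (Sat M steps f i) := by
  induction f with
  | constr c => exact transComplete_datom (.inr (.inr c))
  | state b => exact transComplete_datom (.inl b)
  | act a => exact transComplete_datom (.inr (.inl a))
  | and f g ihf ihg => exact ihf.dand ihg
  | or f g ihf ihg => exact ihf.dor ihg
  | diaA a f => exact (transComplete_dnext hi _).mono sat_diaA_iff.1
  | next f => exact (transComplete_dnext hi _).mono sat_next_iff.1
  | ev f ihf => exact (ihf.dor (transComplete_dnext hi _)).mono (sat_ev_iff hi).1
  | glob f ihf =>
    exact (ihf.dand ((transComplete_dnext hi _).dor (transComplete_dlast hi))).mono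
      (sat_glob_iff hi).1
  | untl f g ihf ihg =>
    exact (ihg.dor (ihf.dand (transComplete_dnext hi _))).mono (sat_untl_iff hi).1

theorem transSound_deltaQ (hi : i ≤ steps.length) (q : QF B A X D) :
    TransSound M steps i (deltaQ q) (SatQ M steps q i) := by
  cases q with
  | tru => exact fun _ _ _ _ _ => trivial
  | fls =>
    rintro x rfl - - hq
    exact hq
  | of f => exact (transSound_delta hi f).mono fun h => ⟨hi, h⟩

theorem transComplete_deltaQ (hi : i ≤ steps.length) (q : QF B A X D) :
    TransComplete M steps i (deltaQ q) (SatQ M steps q i) := by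
  cases q with
  | tru => exact ⟨_, rfl, labelFits_empty, fun _ => trivial⟩
  | fls => exact ⟨_, rfl, labelFits_empty, id⟩
  | of f => exact (transComplete_delta hi f).mono And.right

end Transitions

def IsAccepting (s : QF B A X D ⊕ Unit) : Prop :=
  s = Sum.inl QF.tru ∨ s = Sum.inr ()

def WordHolds (M : DDSA B A X D) (steps : List (A × B × (X → D))) :
    ℕ → List (Set (Sym B A X D)) → Prop
  | _, [] => True
  | i, ς :: w => LetterHolds M steps i ς ∧ WordHolds M steps (i + 1) w

omit [Add D] [Sub D] [LT D] [LE D] in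
theorem NfaSteps.eq_nil_of_inr {w : List (Set (Sym B A X D))}
    {s : QF B A X D ⊕ Unit} (h : NfaSteps (Sum.inr ()) w s) : w = [] := by
  cases h with
  | nil => rfl
  | cons htr _ =>
    obtain ⟨_, _, _, h, -⟩ := htr
    cases h

omit [Add D] [Sub D] [LT D] [LE D] in
theorem NfaSteps.concat {s s₁ s₂ : QF B A X D ⊕ Unit} {w : List (Set (Sym B A X D))}
    {ς : Set (Sym B A X D)} (h : NfaSteps s w s₁) (h' : nfaTrans s₁ ς s₂) :
    NfaSteps s (w ++ [ς]) s₂ := by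
  induction h with
  | nil => exact .cons h' (.nil _)
  | cons htr _ ih => exact .cons htr (ih h')

section NfaCorrectness

variable {M : DDSA B A X D} {steps : List (A × B × (X → D))}

theorem NfaSteps.satQ {s s' : QF B A X D ⊕ Unit} {w : List (Set (Sym B A X D))}
    (h : NfaSteps s w s') (hacc : IsAccepting s') {q : QF B A X D} {i : ℕ}
    (hs : s = .inl q) (hlen : i + w.length = steps.length + 1)
    (hw : WordHolds M steps i w) : SatQ M steps q i := by
  induction h generalizing q i with
  | nil =>
    subst hs
    obtain h | h := hacc
    · cases h
      trivial
    · cases h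
  | cons htr hrest ih =>
    obtain ⟨q₀, q', l, hq₀, hmem, rfl, -, hnext⟩ := htr
    cases hs.symm.trans hq₀
    simp only [List.length_cons] at hlen
    have hsound := transSound_deltaQ (M := M) (by omega) q _ hmem hw.1
    rcases hnext with ⟨hl, rfl⟩ | ⟨-, rfl, rfl⟩
    · exact hsound (fun h => (hl h).elim) (ih hacc rfl (by omega) hw.2)
    · cases hrest.eq_nil_of_inr
      exact hsound (fun _ => by simpa using hlen) trivial

theorem exists_nfaSteps_of_satQ {q : QF B A X D} {i : ℕ} (hi : i ≤ steps.length)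
    (hq : SatQ M steps q i) :
    ∃ w s', NfaSteps (.inl q) w s' ∧ IsAccepting s' ∧
      i + w.length = steps.length + 1 ∧ WordHolds M steps i w := by
  obtain ⟨⟨q', S, Mk⟩, hmem, ⟨hS, hlast, hnotlast⟩, hq'⟩ := transComplete_deltaQ (M := M) hi q
  rcases hi.lt_or_eq with hlt | rfl
  · have hnl : true ∉ Mk := fun h => absurd (hlast h) hlt.ne
    obtain ⟨w, s', hw, hacc, hlen, hword⟩ := exists_nfaSteps_of_satQ hlt (hq' hq)
    refine ⟨S :: w, s', .cons ⟨q, q', (S, Mk), rfl, hmem, rfl, fun h => hnl h.1,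
      .inl ⟨hnl, rfl⟩⟩ hw, hacc, by simp; omega, hS, hword⟩
  · obtain rfl := eq_tru_of_satQ_length_add_one (hq' hq)
    have hboth : ¬(true ∈ Mk ∧ false ∈ Mk) := fun h => absurd (hnotlast h.2) (lt_irrefl _)
    by_cases hl : true ∈ Mk
    · exact ⟨[S], _, .cons ⟨q, _, (S, Mk), rfl, hmem, rfl, hboth, .inr ⟨hl, rfl, rfl⟩⟩
        (.nil _), .inr rfl, rfl, hS, trivial⟩
    · exact ⟨[S], _, .cons ⟨q, _, (S, Mk), rfl, hmem, rfl, hboth, .inl ⟨hl, rfl⟩⟩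
        (.nil _), .inl rfl, rfl, hS, trivial⟩
termination_by steps.length - i

end NfaCorrectness

def letterConstrs (ς : Set (Sym B A X D)) : Set (Constr X D) :=
  {c | Sum.inr (Sum.inr c) ∈ ς}

def stateConstrs : QF B A X D ⊕ Unit → Set (Constr X D) :=
  Sum.elim QF.constrs fun _ => ∅

section Bounds

omit [Add D] [Sub D] [LT D] [LE D]

variable {K : Set (Constr X D)} {R R₁ R₂ : Set (QF B A X D × Lab B A X D)}

def TransBounded (K : Set (Constr X D)) (R : Set (QF B A X D × Lab B A X D)) : Prop :=
  ∀ x ∈ R, letterConstrs x.2.1 ⊆ K ∧ x.1.constrs ⊆ K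

theorem qand_constrs_subset (q₁ q₂ : QF B A X D) :
    (qand q₁ q₂).constrs ⊆ q₁.constrs ∪ q₂.constrs := by
  cases q₁ <;> cases q₂ <;> simp [qand, QF.constrs, LF.constrs]

theorem qor_constrs_subset (q₁ q₂ : QF B A X D) :
    (qor q₁ q₂).constrs ⊆ q₁.constrs ∪ q₂.constrs := by
  cases q₁ <;> cases q₂ <;> simp [qor, QF.constrs, LF.constrs]

theorem TransBounded.mono {K' : Set (Constr X D)} (h : TransBounded K R) (hK : K ⊆ K') :
    TransBounded K' R :=
  fun x hx => (h x hx).imp (·.trans hK) (·.trans hK)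

theorem transBounded_datom (s : Sym B A X D) : TransBounded s.toLF.constrs (datom s) := by
  rintro x (rfl | rfl)
  · refine ⟨?_, by simp [QF.constrs]⟩
    rcases s with b | a | c <;> simp [letterConstrs, Sym.toLF, LF.constrs]
  · simp [letterConstrs, QF.constrs]

theorem TransBounded.dand (h₁ : TransBounded K R₁) (h₂ : TransBounded K R₂) :
    TransBounded K (dand R₁ R₂) := by
  rintro _ ⟨q₁, l₁, q₂, l₂, hx₁, hx₂, rfl⟩
  obtain ⟨hl₁, hq₁⟩ := h₁ _ hx₁
  obtain ⟨hl₂, hq₂⟩ := h₂ _ hx₂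
  exact ⟨Set.union_subset hl₁ hl₂, (qand_constrs_subset q₁ q₂).trans (Set.union_subset hq₁ hq₂)⟩

theorem TransBounded.dor (h₁ : TransBounded K R₁) (h₂ : TransBounded K R₂) :
    TransBounded K (dor R₁ R₂) := by
  rintro _ ⟨q₁, l₁, q₂, l₂, hx₁, hx₂, rfl⟩
  obtain ⟨hl₁, hq₁⟩ := h₁ _ hx₁
  obtain ⟨hl₂, hq₂⟩ := h₂ _ hx₂
  exact ⟨Set.union_subset hl₁ hl₂, (qor_constrs_subset q₁ q₂).trans (Set.union_subset hq₁ hq₂)⟩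

theorem transBounded_dnext {q : QF B A X D} (hq : q.constrs ⊆ K) : TransBounded K (dnext q) := by
  rintro x (rfl | rfl)
  · exact ⟨fun _ h => h.elim, hq⟩
  · exact ⟨fun _ h => h.elim, fun _ h => h.elim⟩

theorem transBounded_dlast : TransBounded K (dlast : Set (QF B A X D × Lab B A X D)) := by
  rintro x (rfl | rfl) <;> exact ⟨fun _ h => h.elim, fun _ h => h.elim⟩

theorem transBounded_delta (f : LF B A X D) : TransBounded f.constrs (delta f) := by
  induction f with
  | constr c => exact transBounded_datom (.inr (.inr c))
  | state b => exact transBounded_datom (.inl b)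
  | act a => exact transBounded_datom (.inr (.inl a))
  | and f g ihf ihg =>
    exact (ihf.mono Set.subset_union_left).dand (ihg.mono Set.subset_union_right)
  | or f g ihf ihg =>
    exact (ihf.mono Set.subset_union_left).dor (ihg.mono Set.subset_union_right)
  | diaA a f => exact transBounded_dnext (by simp [QF.constrs, LF.constrs])
  | next f => exact transBounded_dnext subset_rfl
  | ev f ihf => exact ihf.dor (transBounded_dnext subset_rfl)
  | glob f ihf => exact ihf.dand ((transBounded_dnext subset_rfl).dor transBounded_dlast)
  | untl f g ihf ihg =>
    exact (ihg.mono Set.subset_union_right).dor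
      ((ihf.mono Set.subset_union_left).dand (transBounded_dnext subset_rfl))

theorem transBounded_deltaQ (q : QF B A X D) : TransBounded q.constrs (deltaQ q) := by
  cases q with
  | of f => exact transBounded_delta f
  | _ =>
    rintro x rfl
    exact ⟨fun _ h => h.elim, fun _ h => h.elim⟩

theorem nfaTrans_bounded {s s' : QF B A X D ⊕ Unit} {ς : Set (Sym B A X D)}
    (h : nfaTrans s ς s') (hs : stateConstrs s ⊆ K) :
    letterConstrs ς ⊆ K ∧ stateConstrs s' ⊆ K := by
  obtain ⟨q, q', l, rfl, hmem, rfl, -, ⟨-, rfl⟩ | ⟨-, -, rfl⟩⟩ := h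
  · exact (transBounded_deltaQ q _ hmem).imp (·.trans hs) (·.trans hs)
  · exact ⟨(transBounded_deltaQ q _ hmem).1.trans hs, fun _ h => h.elim⟩

theorem NfaSteps.letterConstrs_subset {s s' : QF B A X D ⊕ Unit}
    {w : List (Set (Sym B A X D))} (h : NfaSteps s w s') (hs : stateConstrs s ⊆ K) :
    ∀ ς ∈ w, letterConstrs ς ⊆ K := by
  induction h with
  | nil => simp
  | cons htr _ ih =>
    obtain ⟨hς, hs'⟩ := nfaTrans_bounded htr hs
    simpa [hς] using ih hs'

end Bounds

def LetterMatches (ς : Set (Sym B A X D)) (a : Option A) (b : B) : Prop :=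
  (∀ b₀, Sum.inl b₀ ∈ ς → b₀ = b) ∧ (∀ a₀, Sum.inr (Sum.inl a₀) ∈ ς → a = some a₀)

section Runs

variable {M : DDSA B A X D} {steps : List (A × B × (X → D))} {t : A × B × (X → D)}
  {ς : Set (Sym B A X D)} {w : List (Set (Sym B A X D))} {i j : ℕ}

theorem letterHolds_zero_iff :
    LetterHolds M steps 0 ς ↔
      LetterMatches ς none M.init ∧ csHolds M.a0 (letterConstrs ς) := by
  constructor
  · intro h
    exact ⟨⟨fun b₀ hb => (h _ hb).symm, fun a₀ ha => absurd (h _ ha).1 (by omega)⟩,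
      fun c hc => h _ hc⟩
  · rintro ⟨⟨hB, hA⟩, hC⟩ (b₀ | a₀ | c) hs
    · exact (hB b₀ hs).symm
    · cases hA a₀ hs
    · exact hC c hs

omit [Add D] [Sub D] [LT D] [LE D] in
theorem confAt_succ (h : steps[j]? = some t) : confAt M steps (j + 1) = (t.2.1, t.2.2) := by
  simp [confAt, h]

theorem letterHolds_succ_iff (h : steps[j]? = some t) :
    LetterHolds M steps (j + 1) ς ↔
      LetterMatches ς (some t.1) t.2.1 ∧ csHolds t.2.2 (letterConstrs ς) := by
  have hconf : confAt M steps (j + 1) = (t.2.1, t.2.2) := confAt_succ h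
  have hstate (b₀ : B) : Sat M steps (.state b₀) (j + 1) ↔ b₀ = t.2.1 := by
    simp [Sat, hconf, eq_comm]
  have hact (a₀ : A) : Sat M steps (.act a₀) (j + 1) ↔ some t.1 = some a₀ := by
    simp [Sat, h]
  have hconstr (c : Constr X D) : Sat M steps (.constr c) (j + 1) ↔ c.holds t.2.2 := by
    simp [Sat, hconf]
  constructor
  · intro hς
    exact ⟨⟨fun b₀ hb => (hstate b₀).1 (hς _ hb), fun a₀ ha => (hact a₀).1 (hς _ ha)⟩,
      fun c hc => (hconstr c).1 (hς _ hc)⟩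
  · rintro ⟨⟨hB, hA⟩, hC⟩ (b₀ | a₀ | c) hs
    exacts [(hstate b₀).2 (hB b₀ hs), (hact a₀).2 (hA a₀ hs), (hconstr c).2 (hC c hs)]

omit [Add D] [Sub D] [LT D] [LE D] in
theorem confAt_append (hj : j ≤ steps.length) :
    confAt M (steps ++ [t]) j = confAt M steps j := by
  cases j with
  | zero => rfl
  | succ j => simp [confAt, List.getElem?_append_left (show j < steps.length by omega)]

theorem sat_toLF_append (hj : j ≤ steps.length) (s : Sym B A X D) :
    Sat M (steps ++ [t]) s.toLF j ↔ Sat M steps s.toLF j := by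
  rcases s with b | a | c
  · simp only [Sym.toLF, Sat, confAt_append hj]
  · simp only [Sym.toLF, Sat]
    exact and_congr_right fun h => by rw [List.getElem?_append_left (by omega)]
  · simp only [Sym.toLF, Sat, confAt_append hj]

theorem WordHolds.append_run (hw : WordHolds M steps i w)
    (hlen : i + w.length ≤ steps.length + 1) : WordHolds M (steps ++ [t]) i w := by
  induction w generalizing i with
  | nil => trivial
  | cons ς w ih =>
    simp only [List.length_cons] at hlen
    exact ⟨fun s hs => (sat_toLF_append (by omega) s).2 (hw.1 s hs), ih hw.2 (by omega)⟩

theorem WordHolds.concat (hw : WordHolds M steps i w)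
    (hς : LetterHolds M steps (i + w.length) ς) : WordHolds M steps i (w ++ [ς]) := by
  induction w generalizing i with
  | nil => exact ⟨hς, trivial⟩
  | cons ς' w ih =>
    refine ⟨hw.1, ih hw.2 ?_⟩
    simpa [Nat.add_assoc, Nat.add_comm 1] using hς

theorem DDSA.IsRun.append (hrun : M.IsRun steps)
    (hstep : M.step (confAt M steps steps.length).1 (confAt M steps steps.length).2
      t.1 t.2.1 t.2.2) : M.IsRun (steps ++ [t]) := by
  intro k t' hk
  rcases lt_or_ge k steps.length with hk' | hk'
  · rw [List.getElem?_append_left hk'] at hk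
    rw [confAt_append hk'.le]
    exact hrun k t' hk
  · obtain rfl : k = steps.length := by
      have := (List.getElem?_eq_some_iff.1 hk).1
      simp at this
      omega
    rw [List.getElem?_concat_length, Option.some_inj] at hk
    subst hk
    rwa [confAt_append le_rfl]

end Runs

def Realizes (M : DDSA B A X D) (w : List (Set (Sym B A X D))) (b : B)
    (Q : (X → D) → Prop) : Prop :=
  ∀ α, Q α → ∃ steps, M.IsRun steps ∧ confAt M steps steps.length = (b, α) ∧
    w.length = steps.length + 1 ∧ WordHolds M steps 0 w

section Realizes

variable {M : DDSA B A X D} {ς : Set (Sym B A X D)}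

theorem realizes_initPred (h : LetterMatches ς none M.init) :
    Realizes M [ς] M.init (M.initPred (letterConstrs ς)) := by
  rintro α ⟨hα, hC⟩
  obtain rfl : α = M.a0 := funext hα
  exact ⟨[], fun k t h => by simp at h, rfl, rfl, letterHolds_zero_iff.2 ⟨h, hC⟩, trivial⟩

theorem Realizes.update {w : List (Set (Sym B A X D))} {b b' : B} {a : A}
    {Q : (X → D) → Prop} (hR : Realizes M w b Q) (htrans : M.trans b a = some b')
    (hm : LetterMatches ς (some a) b') :
    Realizes M (w ++ [ς]) b' fun α' => M.updateSem Q a α' ∧ csHolds α' (letterConstrs ς) := by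
  rintro α' ⟨⟨α, hQ, hΔ⟩, hC⟩
  obtain ⟨steps, hrun, hend, hlen, hw⟩ := hR α hQ
  have hlast : (steps ++ [(a, b', α')])[steps.length]? = some (a, b', α') :=
    List.getElem?_concat_length ..
  refine ⟨steps ++ [(a, b', α')], hrun.append ?_, ?_, by simp [hlen], ?_⟩
  · rw [hend]
    exact ⟨htrans, hΔ⟩
  · simpa using confAt_succ (M := M) hlast
  · refine (hw.append_run (by omega)).concat ?_
    rw [hlen, zero_add]
    exact (letterHolds_succ_iff hlast).2 ⟨hm, hC⟩

end Realizes

structure IsSummary (M : DDSA B A X D) (CC : Set (Constr X D))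
    (Φ : Set (B × ((X → D) → Prop)))
    (sim : ((X → D) → Prop) → ((X → D) → Prop) → Prop) : Prop where
  historySet : M.IsHistorySet CC Φ
  equivalence : Equivalence sim
  sim_of_eqv : ∀ P Q, eqv P Q → sim P Q
  exists_iff : ∀ b P Q, (b, P) ∈ Φ → (b, Q) ∈ Φ → sim P Q → ((∃ α, P α) ↔ ∃ α, Q α)
  sim_update : ∀ b P Q a b' C, (b, P) ∈ Φ → (b, Q) ∈ Φ → sim P Q →
    M.trans b a = some b' → C ⊆ CC →
    sim (fun α => M.updateSem P a α ∧ csHolds α C) (fun α => M.updateSem Q a α ∧ csHolds α C)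

theorem IsFiniteSummary.isSummary {M : DDSA B A X D} {CC : Set (Constr X D)}
    {Φ : Set (B × ((X → D) → Prop))} {sim : ((X → D) → Prop) → ((X → D) → Prop) → Prop}
    (h : IsFiniteSummary M CC Φ sim) : IsSummary M CC Φ sim :=
  ⟨h.1, h.2.1, h.2.2.1, h.2.2.2.2.1, h.2.2.2.2.2.1⟩

/-- The formula `⋀ C_{α₀}`. -/
def DDSA.initFormula (M : DDSA B A X D) : (X → D) → Prop :=
  fun α => ∀ v, α v = M.a0 v

/-- The formula `χ = update(φ, a) ∧ ⋀ constr(ς)` of `prodStep`. -/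
def stepFormula (M : DDSA B A X D) (P : (X → D) → Prop) (a : Option A)
    (ς : Set (Sym B A X D)) : (X → D) → Prop :=
  fun α => (extD M).updateSem P a α ∧ csHolds α (letterConstrs ς)

def Tracked (M : DDSA B A X D) (Φ : Set (B × ((X → D) → Prop)))
    (sim : ((X → D) → Prop) → ((X → D) → Prop) → Prop) (ψ : LF B A X D)
    (p : Option B × (QF B A X D ⊕ Unit) × ((X → D) → Prop)) : Prop :=
  ∃ b w Q, p.1 = some b ∧ NfaSteps (.inl (.of ψ)) w p.2.1 ∧ (b, p.2.2) ∈ Φ ∧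
    (∃ α, p.2.2 α) ∧ (b, Q) ∈ Φ ∧ sim p.2.2 Q ∧ Realizes M w b Q

section Product

variable {M : DDSA B A X D} {CC : Set (Constr X D)} {Φ : Set (B × ((X → D) → Prop))}
  {sim : ((X → D) → Prop) → ((X → D) → Prop) → Prop} {ψ : LF B A X D}
  {P Q : (X → D) → Prop} {ς : Set (Sym B A X D)} {b b' : B}

omit [Add D] [Sub D] [LT D] [LE D] in
theorem extD_trans_none {a : Option A} (h : (extD M).trans none a = some (some b')) :
    a = none ∧ b' = M.init := by
  cases a with
  | none => exact ⟨rfl, (Option.some_injective _ (Option.some_injective _ h)).symm⟩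
  | some a => cases h

omit [Add D] [Sub D] [LT D] [LE D] in
theorem extD_trans_some {a : Option A} (h : (extD M).trans (some b) a = some (some b')) :
    ∃ a', a = some a' ∧ M.trans b a' = some b' := by
  cases a with
  | none => cases h
  | some a => exact ⟨a, rfl, by simpa [extD] using h⟩

theorem eqv_stepFormula_none_init :
    eqv (stepFormula M M.initFormula none ς) (M.initPred (letterConstrs ς)) := by
  intro α
  refine and_congr_left fun _ => ⟨fun ⟨β, hβ, _, hframe⟩ v => ?_,
    fun hα => ⟨α, hα, trivial, fun _ _ => rfl⟩⟩
  rw [← hβ v]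
  -- the guard `⊤` of the dummy action writes no variable
  exact hframe v (by simp [extD, DDSA.writes, Constr.vars])

theorem DDSA.IsHistorySet.exists_eqv_stepFormula_none (hΦ : M.IsHistorySet CC Φ)
    (hC : letterConstrs ς ⊆ CC) :
    ∃ Q, (M.init, Q) ∈ Φ ∧ eqv Q (stepFormula M M.initFormula none ς) :=
  let ⟨Q, hQ, hQeqv⟩ := hΦ.1 _ hC
  ⟨Q, hQ, fun α => (hQeqv α).trans (eqv_stepFormula_none_init α).symm⟩

theorem DDSA.IsHistorySet.exists_eqv_stepFormula_some (hΦ : M.IsHistorySet CC Φ)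
    (hP : (b, P) ∈ Φ) {a : A} (htrans : M.trans b a = some b') (hC : letterConstrs ς ⊆ CC) :
    ∃ Q, (b', Q) ∈ Φ ∧ eqv Q (stepFormula M P (some a) ς) :=
  hΦ.2 b P hP a b' htrans _ hC

theorem IsSummary.sim_of_sim_eqv (hS : IsSummary M CC Φ sim) {χ : (X → D) → Prop}
    (h : sim P χ) (hQ : eqv Q χ) : sim P Q :=
  hS.equivalence.trans h (hS.equivalence.symm (hS.sim_of_eqv _ _ hQ))

theorem IsSummary.exists_of_sim (hS : IsSummary M CC Φ sim) {χ : (X → D) → Prop}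
    (hP : (b, P) ∈ Φ) (hQ : (b, Q) ∈ Φ) (hPχ : sim P χ) (hQχ : eqv Q χ)
    (hχ : ∃ α, χ α) : ∃ α, P α :=
  (hS.exists_iff b P Q hP hQ (hS.sim_of_sim_eqv hPχ hQχ)).2 (hχ.imp fun α h => (hQχ α).2 h)

theorem tracked_of_prodStep_init (hS : IsSummary M CC Φ sim) (hψ : ψ.constrs ⊆ CC)
    {p : Option B × (QF B A X D ⊕ Unit) × ((X → D) → Prop)}
    (h : prodStep M Φ sim (none, .inl (.of ψ), M.initFormula) p) : Tracked M Φ sim ψ p := by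
  obtain ⟨a, b', ς, htrans, hp, hnfa, hB, hA, hχ, hsim, hΦ⟩ := h
  obtain ⟨rfl, rfl⟩ := extD_trans_none htrans
  obtain ⟨Q, hQ, hQχ⟩ :=
    hS.historySet.exists_eqv_stepFormula_none (nfaTrans_bounded hnfa hψ).1
  refine ⟨M.init, [ς], Q, hp, .cons hnfa (.nil _), hΦ, hS.exists_of_sim hΦ hQ hsim hQχ hχ,
    hQ, hS.sim_of_sim_eqv hsim hQχ, fun α hα => realizes_initPred ⟨hB, hA⟩ α ?_⟩
  exact eqv_stepFormula_none_init α |>.1 ((hQχ α).1 hα)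

theorem Tracked.prodStep (hS : IsSummary M CC Φ sim) (hψ : ψ.constrs ⊆ CC)
    {p p' : Option B × (QF B A X D ⊕ Unit) × ((X → D) → Prop)}
    (hp : Tracked M Φ sim ψ p) (h : prodStep M Φ sim p p') : Tracked M Φ sim ψ p' := by
  obtain ⟨b, w, Q, hp1, hw, hPΦ, -, hQΦ, hPQ, hR⟩ := hp
  obtain ⟨a, b', ς, htrans, hp', hnfa, hB, hA, hχ, hsim, hΦ⟩ := h
  rw [hp1] at htrans
  obtain ⟨a, rfl, htransM⟩ := extD_trans_some htrans
  have hw' := hw.concat hnfa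
  have hC : letterConstrs ς ⊆ CC := hw'.letterConstrs_subset hψ ς (by simp)
  obtain ⟨R, hRΦ, hRχ⟩ := hS.historySet.exists_eqv_stepFormula_some hPΦ htransM hC
  obtain ⟨Q', hQ'Φ, hQ'χ⟩ := hS.historySet.exists_eqv_stepFormula_some hQΦ htransM hC
  refine ⟨b', w ++ [ς], Q', hp', hw', hΦ, hS.exists_of_sim hΦ hRΦ hsim hRχ hχ, hQ'Φ, ?_,
    fun α hα => (hR.update htransM ⟨hB, hA⟩) α ((hQ'χ α).1 hα)⟩
  exact hS.sim_of_sim_eqv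
    (hS.equivalence.trans hsim (hS.sim_update b _ Q a b' _ hPΦ hQΦ hPQ htransM hC)) hQ'χ

theorem tracked_of_reflTransGen (hS : IsSummary M CC Φ sim) (hψ : ψ.constrs ⊆ CC)
    {p : Option B × (QF B A X D ⊕ Unit) × ((X → D) → Prop)}
    (h : Relation.ReflTransGen (prodStep M Φ sim) (none, .inl (.of ψ), M.initFormula) p) :
    p = (none, .inl (.of ψ), M.initFormula) ∨ Tracked M Φ sim ψ p := by
  induction h with
  | refl => exact .inl rfl
  | tail _ hstep ih =>
    refine .inr ?_
    rcases ih with rfl | hp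
    exacts [tracked_of_prodStep_init hS hψ hstep, hp.prodStep hS hψ hstep]

theorem Tracked.exists_witness (hS : IsSummary M CC Φ sim)
    {p : Option B × (QF B A X D ⊕ Unit) × ((X → D) → Prop)} (hp : Tracked M Φ sim ψ p)
    {bf : B} (hp1 : p.1 = some bf) (hbf : bf ∈ M.final) (hacc : IsAccepting p.2.1) :
    ∃ steps, M.IsRun steps ∧ (confAt M steps steps.length).1 ∈ M.final ∧
      Sat M steps ψ 0 := by
  obtain ⟨b, w, Q, hb, hw, hPΦ, hPsat, hQΦ, hPQ, hR⟩ := hp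
  obtain rfl : b = bf := Option.some_injective _ (hb.symm.trans hp1)
  obtain ⟨α, hα⟩ := (hS.exists_iff _ _ _ hPΦ hQΦ hPQ).1 hPsat
  obtain ⟨steps, hrun, hend, hlen, hword⟩ := hR α hα
  exact ⟨steps, hrun, by rw [hend]; exact hbf, (hw.satQ hacc rfl (by omega) hword).2⟩

theorem exists_prodStep (hsim : ∀ P Q, eqv P Q → sim P Q) {b? : Option B} {a : Option A}
    {s s' : QF B A X D ⊕ Unit} {α' : X → D} (htrans : (extD M).trans b? a = some (some b'))
    (hnfa : nfaTrans s ς s') (hm : LetterMatches ς a b') (hχ : stepFormula M P a ς α')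
    (hQ : ∃ Q, (b', Q) ∈ Φ ∧ eqv Q (stepFormula M P a ς)) :
    ∃ Q, prodStep M Φ sim (b?, s, P) (some b', s', Q) ∧ (b', Q) ∈ Φ ∧ Q α' :=
  let ⟨Q, hQΦ, hQχ⟩ := hQ
  ⟨Q, ⟨a, b', ς, htrans, rfl, hnfa, hm.1, hm.2, ⟨α', hχ⟩, hsim _ _ hQχ, hQΦ⟩, hQΦ,
    (hQχ α').2 hχ⟩

theorem exists_prodPath_of_run (hΦ : M.IsHistorySet CC Φ) (hsim : ∀ P Q, eqv P Q → sim P Q)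
    {steps : List (A × B × (X → D))} (hrun : M.IsRun steps) {s s' : QF B A X D ⊕ Unit}
    {w : List (Set (Sym B A X D))} (h : NfaSteps s w s') {j : ℕ} {P : (X → D) → Prop}
    (hlen : j + w.length = steps.length) (hw : WordHolds M steps (j + 1) w)
    (hC : ∀ ς ∈ w, letterConstrs ς ⊆ CC) (hP : ((confAt M steps j).1, P) ∈ Φ)
    (hPα : P (confAt M steps j).2) :
    ∃ P', Relation.ReflTransGen (prodStep M Φ sim) (some (confAt M steps j).1, s, P)
      (some (confAt M steps steps.length).1, s', P') := by
  induction h generalizing j P with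
  | nil =>
    obtain rfl : j = steps.length := by simpa using hlen
    exact ⟨P, .refl⟩
  | @cons _ _ _ ς w hnfa _ ih =>
    simp only [List.length_cons] at hlen
    have ht : steps[j]? = some steps[j] := List.getElem?_eq_getElem (by omega)
    obtain ⟨htrans, hΔ⟩ := hrun j _ ht
    obtain ⟨hm, hcs⟩ := (letterHolds_succ_iff ht).1 hw.1
    have hconf := confAt_succ (M := M) ht
    obtain ⟨Q, hstep, hQΦ, hQα⟩ := exists_prodStep hsim (b? := some (confAt M steps j).1)
      (by simp [extD, htrans]) hnfa hm ⟨⟨_, hPα, hΔ⟩, hcs⟩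
      (hΦ.exists_eqv_stepFormula_some hP htrans (hC ς (by simp)))
    obtain ⟨P', hpath⟩ := ih (j := j + 1) (by omega) hw.2 (fun ς' h => hC ς' (by simp [h]))
      (by rwa [hconf]) (by rwa [hconf])
    rw [hconf] at hpath
    exact ⟨P', .head hstep hpath⟩

theorem exists_prodPath_of_witness (hΦ : M.IsHistorySet CC Φ)
    (hsim : ∀ P Q, eqv P Q → sim P Q) (hψ : ψ.constrs ⊆ CC) {steps : List (A × B × (X → D))}
    (hrun : M.IsRun steps) (hfin : (confAt M steps steps.length).1 ∈ M.final)
    (hsat : Sat M steps ψ 0) :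
    ∃ p, Relation.ReflTransGen (prodStep M Φ sim) (none, .inl (.of ψ), M.initFormula) p ∧
      (∃ bf ∈ M.final, p.1 = some bf) ∧ IsAccepting p.2.1 := by
  obtain ⟨w, s', hw, hacc, hlen, hword⟩ :=
    exists_nfaSteps_of_satQ (M := M) (q := .of ψ) (Nat.zero_le _) ⟨Nat.zero_le _, hsat⟩
  have hC := hw.letterConstrs_subset hψ
  obtain _ | @⟨_, s₁, _, ς, w, hnfa, hrest⟩ := hw
  · simp at hlen
  obtain ⟨hm, hcs⟩ := letterHolds_zero_iff.1 hword.1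
  obtain ⟨Q, hstep, hQΦ, hQα⟩ := exists_prodStep hsim (b? := none) (a := none) rfl hnfa hm
    ((eqv_stepFormula_none_init _).2 ⟨fun _ => rfl, hcs⟩)
    (hΦ.exists_eqv_stepFormula_none (hC ς (by simp)))
  obtain ⟨P', hpath⟩ := exists_prodPath_of_run hΦ hsim hrun hrest (j := 0)
    (by simp at hlen; omega) hword.2 (fun ς' h => hC ς' (by simp [h])) hQΦ hQα
  exact ⟨_, .head hstep hpath, ⟨_, hfin, rfl⟩, hacc⟩

end Product

theorem product_automaton_correctness_general (B A X D : Type)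
    [Add D] [Sub D] [LT D] [LE D]
    (M : DDSA B A X D) (CC : Set (Constr X D))
    (Φ : Set (B × ((X → D) → Prop)))
    (sim : ((X → D) → Prop) → ((X → D) → Prop) → Prop)
    (hsum : IsFiniteSummary M CC Φ sim)
    (ψ : LF B A X D) (hψ : ψ.constrs ⊆ CC) :
    (∃ p, Relation.ReflTransGen (prodStep M Φ sim)
        (none, Sum.inl (QF.of ψ), fun α => ∀ v, α v = M.a0 v) p ∧
      (∃ bf ∈ M.final, p.1 = some bf) ∧
      (p.2.1 = Sum.inl QF.tru ∨ p.2.1 = Sum.inr ())) ↔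
    (∃ steps, M.IsRun steps ∧ (confAt M steps steps.length).1 ∈ M.final ∧
      Sat M steps ψ 0) := by
  have hS := hsum.isSummary
  constructor
  · rintro ⟨p, hpath, ⟨bf, hbf, hp⟩, hacc⟩
    rcases tracked_of_reflTransGen hS hψ hpath with rfl | htracked
    · cases hp
    · exact htracked.exists_witness hS hp hbf hacc
  · rintro ⟨steps, hrun, hfin, hsat⟩
    exact exists_prodPath_of_witness hS.historySet hS.sim_of_eqv hψ hrun hfin hsat

/-- Theorem 3.  For a DDSA `M` with finite summary
`(Φ, ∼)` for `CC` and a formula `ψ ∈ L` whose constraints belong to `CC`,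
the language of the product automaton `N_B^ψ` is non-empty iff `M` has a run
ending in a final state that satisfies `ψ` (a witness for `ψ`). -/
theorem product_automaton_correctness (B A X D : Type)
    [Add D] [Sub D] [LT D] [LE D]
    (M : DDSA B A X D) (CC : Set (Constr X D))
    (Φ : Set (B × ((X → D) → Prop)))
    (sim : ((X → D) → Prop) → ((X → D) → Prop) → Prop)
    (hsum : IsFiniteSummary M CC Φ sim)
    (hfinclasses : ∃ S : Set ((X → D) → Prop), S.Finite ∧
      ∀ P, ∃ Q ∈ S, sim P Q)
    (ψ : LF B A X D) (hψ : ψ.constrs ⊆ CC) :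
    (∃ p, Relation.ReflTransGen (prodStep M Φ sim)
        (none, Sum.inl (QF.of ψ), fun α => ∀ v, α v = M.a0 v) p ∧
      (∃ bf ∈ M.final, p.1 = some bf) ∧
      (p.2.1 = Sum.inl QF.tru ∨ p.2.1 = Sum.inr ())) ↔
    (∃ steps, M.IsRun steps ∧ (confAt M steps steps.length).1 ∈ M.final ∧
      Sat M steps ψ 0) :=
  product_automaton_correctness_general B A X D M CC Φ sim hsum ψ hψ

end DDS
end
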